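/- arXiv:1403.6215 — 3 statements merged into one kernel-verified Lean document; each statement's English description precedes it below -/
import Mathlib

section
/- Let A and B be dg-algebras over a common ring of idempotents k. There is a bijection between (a) rank-1 left-right type DA bimodules over B and A whose structure map δ¹₁ (the component with zero algebra inputs) vanishes, and (b) A∞-algebra morphisms φ : A → B; under this bijection, φ corresponds to the bimodule with actions δ¹_{k+1}(1, a₁, …, a_k) = φ_k(a₁, …, a_k) ⊗ 1, and the type DA structure equations for the bimodule are equivalent to the A∞-morphism equations for φ. -/
/-!
STATEMENT 5: Let `A` and `B` be dg-algebras over `F₂`.  There is a bijection between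
rank-1 left-right type DA bimodules `ᴮMᴀ` whose structure map `δ¹₁` (zero algebra
inputs) vanishes and `A∞`-algebra morphisms `φ : A → B`.  A rank-1 type DA bimodule
is encoded by its family of structure maps `δ n : A^{⊗n} → B` (so `δ n` is the
coefficient of `δ¹_{n+1}`, and `δ 0` is `δ¹₁`); an `A∞`-morphism is encoded by its
family of components `φ n : A^{⊗n} → B` (with `φ 0 = 0`).  Under the bijection,
`δ¹_{k+1}(1, a₁, …, a_k) = φ_k(a₁, …, a_k) ⊗ 1`, i.e. the two families of maps
coincide, and the type DA structure equations are equivalent to the `A∞`-morphism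
equations.
-/

open scoped BigOperators

/-- Merge the `i`-th and `(i+1)`-st entries of an argument list by multiplying them. -/
def mergeAt {A : Type} [Mul A] {n : ℕ} (a : Fin (n + 1) → A) (i : Fin n) :
    Fin n → A := fun j =>
  if (j : ℕ) < (i : ℕ) then a ⟨(j : ℕ), by have := j.isLt; omega⟩
  else if (j : ℕ) = (i : ℕ) then
    a ⟨(j : ℕ), by have := j.isLt; omega⟩ * a ⟨(j : ℕ) + 1, by have := j.isLt; omega⟩
  else a ⟨(j : ℕ) + 1, by have := j.isLt; omega⟩

section
variable (A B : Type) [Ring A] [Ring B] [Algebra (ZMod 2) A] [Algebra (ZMod 2) B]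

/-- The type DA structure equations for a rank-1 type DA bimodule `ᴮMᴀ` with
structure maps `δ n : A^{⊗n} → B` (`δ n` being `δ¹_{n+1}`). -/
def DAStructEq (dA : A →ₗ[ZMod 2] A) (dB : B →ₗ[ZMod 2] B)
    (δ : (n : ℕ) → MultilinearMap (ZMod 2) (fun _ : Fin n => A) B) : Prop :=
  ∀ (n : ℕ) (a : Fin n → A),
    -- two iterations of `δ¹`, multiplying the two outputs in `B`:
    (∑ k : Fin (n + 1),
        (δ (k : ℕ) fun j : Fin (k : ℕ) =>
            a ⟨(j : ℕ), by have := j.isLt; have := k.isLt; omega⟩)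
          * (δ (n - (k : ℕ)) fun j : Fin (n - (k : ℕ)) =>
              a ⟨(k : ℕ) + (j : ℕ), by have := j.isLt; omega⟩))
      -- `δ¹` applied after the differential of one input:
      + (∑ i : Fin n, δ n (Function.update a i (dA (a i))))
      -- `δ¹` applied after multiplying two adjacent inputs:
      + (∑ i : Fin (n - 1),
          δ (n - 1)
            (mergeAt (fun j : Fin ((n - 1) + 1) =>
              a ⟨(j : ℕ), by have := j.isLt; have := i.isLt; omega⟩) i))
      -- the differential of `B` applied to the output of `δ¹`:
      + dB (δ n a)
      = 0

/-- The `A∞`-morphism equations for `φ : A → B` with components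
`φ n : A^{⊗n} → B`, `n ≥ 1` (the family is indexed by all `n` with `φ 0 = 0`
imposed separately). -/
def AInfMorphismEq (dA : A →ₗ[ZMod 2] A) (dB : B →ₗ[ZMod 2] B)
    (φ : (n : ℕ) → MultilinearMap (ZMod 2) (fun _ : Fin n => A) B) : Prop :=
  ∀ (n : ℕ) (a : Fin n → A),
    -- d_B ∘ φ_n:
    dB (φ n a)
      -- φ_n applied after the differential of one input:
      + (∑ i : Fin n, φ n (Function.update a i (dA (a i))))
      -- φ_{n-1} applied after multiplying two adjacent inputs:
      + (∑ i : Fin (n - 1),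
          φ (n - 1)
            (mergeAt (fun j : Fin ((n - 1) + 1) =>
              a ⟨(j : ℕ), by have := j.isLt; have := i.isLt; omega⟩) i))
      -- μ_B(φ_i ⊗ φ_j) over proper two-part splittings of the inputs:
      + (∑ k : Fin (n - 1),
          (φ ((k : ℕ) + 1) fun j : Fin ((k : ℕ) + 1) =>
              a ⟨(j : ℕ), by have := j.isLt; have := k.isLt; omega⟩)
            * (φ (n - ((k : ℕ) + 1)) fun j : Fin (n - ((k : ℕ) + 1)) =>
                a ⟨(k : ℕ) + 1 + (j : ℕ), by have := j.isLt; omega⟩))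
      = 0

lemma key (ψ : (n : ℕ) → MultilinearMap (ZMod 2) (fun _ : Fin n => A) B)
    (hψ : ψ 0 = 0) (n : ℕ) (a : Fin n → A) :
    (∑ k : Fin (n + 1),
        (ψ (k : ℕ) fun j : Fin (k : ℕ) =>
            a ⟨(j : ℕ), by have := j.isLt; have := k.isLt; omega⟩)
          * (ψ (n - (k : ℕ)) fun j : Fin (n - (k : ℕ)) =>
              a ⟨(k : ℕ) + (j : ℕ), by have := j.isLt; omega⟩))
    = ∑ k : Fin (n - 1),
        (ψ ((k : ℕ) + 1) fun j : Fin ((k : ℕ) + 1) =>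
            a ⟨(j : ℕ), by have := j.isLt; have := k.isLt; omega⟩)
          * (ψ (n - ((k : ℕ) + 1)) fun j : Fin (n - ((k : ℕ) + 1)) =>
              a ⟨(k : ℕ) + 1 + (j : ℕ), by have := j.isLt; omega⟩) := by
  rw [Fin.sum_univ_succ]
  have h0 : (ψ ((0 : Fin (n+1)) : ℕ) fun j : Fin ((0 : Fin (n+1)) : ℕ) =>
      a ⟨(j : ℕ), by have := j.isLt; omega⟩) = 0 := by
    rw [show ψ ((0 : Fin (n+1)) : ℕ) = ψ 0 from rfl, hψ]; rfl
  rw [h0, zero_mul, zero_add]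
  cases n with
  | zero => simp
  | succ m =>
    rw [Fin.sum_univ_castSucc]
    have hlast : (ψ (m + 1 - ((Fin.last m).succ : ℕ)) fun j : Fin (m + 1 - ((Fin.last m).succ : ℕ)) =>
        a ⟨((Fin.last m).succ : ℕ) + (j : ℕ), by have := j.isLt; omega⟩) = 0 := by
      have hz : ∀ (k : ℕ) (hk : k = 0) (f : Fin k → A), ψ k f = 0 := by
        rintro k rfl f; rw [hψ]; rfl
      exact hz _ (by simp) _
    rw [hlast, mul_zero, add_zero]
    apply Finset.sum_congr rfl
    intro k _
    rfl

theorem stmt_5 (dA : A →ₗ[ZMod 2] A) (dB : B →ₗ[ZMod 2] B)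
    -- `A` and `B` are dg-algebras:
    (hdA2 : ∀ a, dA (dA a) = 0) (hLeibA : ∀ a b, dA (a * b) = dA a * b + a * dA b)
    (hdB2 : ∀ b, dB (dB b) = 0) (hLeibB : ∀ a b, dB (a * b) = dB a * b + a * dB b) :
    -- for rank-1 data with vanishing `δ¹₁`, the type DA structure equations are
    -- equivalent to the `A∞`-morphism equations …
    (∀ ψ : (n : ℕ) → MultilinearMap (ZMod 2) (fun _ : Fin n => A) B,
      ψ 0 = 0 → (DAStructEq A B dA dB ψ ↔ AInfMorphismEq A B dA dB ψ)) ∧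
      -- … whence the bijection between rank-1 type DA bimodules with `δ¹₁ = 0`
      -- and `A∞`-morphisms `φ : A → B`, matching `δ¹_{k+1}` with `φ_k`:
      ∃ e : {δ : (n : ℕ) → MultilinearMap (ZMod 2) (fun _ : Fin n => A) B //
              δ 0 = 0 ∧ DAStructEq A B dA dB δ} ≃
            {φ : (n : ℕ) → MultilinearMap (ZMod 2) (fun _ : Fin n => A) B //
              φ 0 = 0 ∧ AInfMorphismEq A B dA dB φ},
        ∀ δ, (e δ : (n : ℕ) → MultilinearMap (ZMod 2) (fun _ : Fin n => A) B) = δ := by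
  have main : ∀ ψ : (n : ℕ) → MultilinearMap (ZMod 2) (fun _ : Fin n => A) B,
      ψ 0 = 0 → (DAStructEq A B dA dB ψ ↔ AInfMorphismEq A B dA dB ψ) := by
    intro ψ hψ
    constructor
    · intro h n a
      have H := h n a
      rw [key A B ψ hψ n a] at H
      rw [← H]
      abel
    · intro h n a
      have H := h n a
      rw [key A B ψ hψ n a]
      rw [← H]
      abel
  refine ⟨main, Equiv.subtypeEquivRight (fun ψ => ?_), fun _ => rfl⟩
  constructor
  · rintro ⟨h0, h⟩; exact ⟨h0, (main ψ h0).1 h⟩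
  · rintro ⟨h0, h⟩; exact ⟨h0, (main ψ h0).2 h⟩

end
end

section
/- In the strand algebra A(n) over F₂, the differential d and the multiplication satisfy the Leibniz rule d(ab) = d(a)·b + a·d(b), so A(n) is a dg-algebra. -/
/-!
STATEMENT 10: In the strand algebra `A(n)` over `F₂` (differential resolving
crossings and multiplication by concatenation, with terms containing double
crossings set to zero), the differential and multiplication satisfy the Leibniz
rule `d(ab) = d(a)·b + a·d(b)`; thus `A(n)` is a dg-algebra.
-/

/-- A strand diagram on `n` positions: a finite set of strands `(start, end)`. -/
abbrev StrandDiagram (n : ℕ) := Finset (Fin n × Fin n)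

/-- `s` is a generator of the strand algebra `A(n)`. -/
def IsGen {n : ℕ} (s : StrandDiagram n) : Prop :=
  (∀ p ∈ s, p.1 ≤ p.2) ∧
    (s.image Prod.fst).card = s.card ∧ (s.image Prod.snd).card = s.card

/-- The number of crossings (inversions) of a strand diagram. -/
def crossings {n : ℕ} (s : StrandDiagram n) : ℕ :=
  ((s ×ˢ s).filter (fun pq => pq.1.1 < pq.2.1 ∧ pq.2.2 < pq.1.2)).card

/-- Exchange the endpoints of the two strands `p` and `q` of `s`. -/
def exchange {n : ℕ} (s : StrandDiagram n) (p q : Fin n × Fin n) : StrandDiagram n :=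
  (s \ {p, q}) ∪ {(p.1, q.2), (q.1, p.2)}

/-- The differential of a generator of `A(n)`. -/
noncomputable def dGen {n : ℕ} (s : StrandDiagram n) : StrandDiagram n →₀ ZMod 2 :=
  ∑ pq ∈ (s ×ˢ s).filter (fun pq => pq.1.1 < pq.2.1 ∧ pq.2.2 < pq.1.2),
    if crossings (exchange s pq.1 pq.2) + 1 = crossings s
    then Finsupp.single (exchange s pq.1 pq.2) 1 else 0

/-- The differential of `A(n)`, extended linearly. -/
noncomputable def dAlg (n : ℕ) :
    (StrandDiagram n →₀ ZMod 2) →ₗ[ZMod 2] (StrandDiagram n →₀ ZMod 2) :=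
  Finsupp.linearCombination (ZMod 2) dGen

/-- Concatenation of strand diagrams. -/
def concat {n : ℕ} (s t : StrandDiagram n) : StrandDiagram n :=
  ((s ×ˢ t).filter (fun pq => pq.1.2 = pq.2.1)).image (fun pq => (pq.1.1, pq.2.2))

/-- The product of two generators `(S,T,φ)·(T',U,ψ)`: the concatenation `(S,U,ψ∘φ)`
if `T = T'` and no double crossings are created (equivalently, crossings add up),
and zero otherwise. -/
noncomputable def mulGen {n : ℕ} (s t : StrandDiagram n) : StrandDiagram n →₀ ZMod 2 :=
  if s.image Prod.snd = t.image Prod.fst ∧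
      crossings (concat s t) = crossings s + crossings t
  then Finsupp.single (concat s t) 1 else 0

/-- The product on `A(n)`, extended bilinearly. -/
noncomputable def mulAlg {n : ℕ} (x y : StrandDiagram n →₀ ZMod 2) :
    StrandDiagram n →₀ ZMod 2 :=
  x.sum fun s cs => y.sum fun t ct => (cs * ct) • mulGen s t


section Abstract
variable {α : Type*} [LinearOrder α] [DecidableEq α]

/-- number of inversions of `f` on `A`. -/
def crN (A : Finset α) (f : α → α) : ℕ :=
  ((A ×ˢ A).filter fun p => p.1 < p.2 ∧ f p.2 < f p.1).card

/-- inversions of `g` relative to the `f`-order. -/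
def crTN (A : Finset α) (f g : α → α) : ℕ :=
  ((A ×ˢ A).filter fun p => f p.1 < f p.2 ∧ g p.2 < g p.1).card

/-- double crossings of the pair `(f, g∘f⁻¹)`. -/
def DN (A : Finset α) (f g : α → α) : ℕ :=
  ((A ×ˢ A).filter fun p => p.1 < p.2 ∧ f p.2 < f p.1 ∧ g p.1 < g p.2).card

/-- strands inside the rectangle of the crossing `(a1,a2)` of `f`. -/
def RN (A : Finset α) (f : α → α) (a1 a2 : α) : ℕ :=
  (A.filter fun x => (a1 < x ∧ x < a2) ∧ f a2 < f x ∧ f x < f a1).card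

/-- strands inside the rectangle of the `t`-crossing over `(a1,a2)`. -/
def RTN (A : Finset α) (f g : α → α) (a1 a2 : α) : ℕ :=
  (A.filter fun x => (f a1 < f x ∧ f x < f a2) ∧ g a2 < g x ∧ g x < g a1).card

theorem DN_eq_zero_iff {A : Finset α} {f g : α → α} :
    DN A f g = 0 ↔ ∀ x ∈ A, ∀ y ∈ A, x < y → f y < f x → g x < g y → False := by
  simp only [DN, Finset.card_eq_zero, Finset.filter_eq_empty_iff, Finset.mem_product]
  constructor
  · intro h x hx y hy h1 h2 h3
    exact @h (x, y) ⟨hx, hy⟩ ⟨h1, h2, h3⟩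
  · rintro h ⟨x, y⟩ ⟨hx, hy⟩ ⟨h1, h2, h3⟩
    exact h x hx y hy h1 h2 h3

theorem RN_eq_zero_iff {A : Finset α} {f : α → α} {a1 a2 : α} :
    RN A f a1 a2 = 0 ↔ ∀ x ∈ A, a1 < x → x < a2 → f a2 < f x → f x < f a1 → False := by
  simp only [RN, Finset.card_eq_zero, Finset.filter_eq_empty_iff]
  constructor
  · intro h x hx h1 h2 h3 h4; exact h hx ⟨⟨h1, h2⟩, h3, h4⟩
  · rintro h x hx ⟨⟨h1, h2⟩, h3, h4⟩; exact h x hx h1 h2 h3 h4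

theorem RTN_eq_zero_iff {A : Finset α} {f g : α → α} {a1 a2 : α} :
    RTN A f g a1 a2 = 0 ↔
      ∀ x ∈ A, f a1 < f x → f x < f a2 → g a2 < g x → g x < g a1 → False := by
  simp only [RTN, Finset.card_eq_zero, Finset.filter_eq_empty_iff]
  constructor
  · intro h x hx h1 h2 h3 h4; exact h hx ⟨⟨h1, h2⟩, h3, h4⟩
  · rintro h x hx ⟨⟨h1, h2⟩, h3, h4⟩; exact h x hx h1 h2 h3 h4

end Abstract
section Logic
variable {α : Type*} [LinearOrder α] [DecidableEq α] {A : Finset α} {f g : α → α} {a1 a2 : α}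

/-- s-side equivalence: for a non-double crossing `(a1,a2)` of `s`, the rectangle in `st`
is empty iff the rectangle in `s` is empty and the resolved product has no double crossing. -/
theorem lemEs (injf : Set.InjOn f A) (injg : Set.InjOn g A)
    (ha1 : a1 ∈ A) (ha2 : a2 ∈ A) (h12 : a1 < a2) (hf : f a2 < f a1) (hg : g a2 < g a1)
    (hnd : ∀ x ∈ A, ∀ y ∈ A, x < y → f y < f x → g x < g y → False) :
    (∀ x ∈ A, a1 < x → x < a2 → g a2 < g x → g x < g a1 → False) ↔
      ((∀ x ∈ A, a1 < x → x < a2 → f a2 < f x → f x < f a1 → False) ∧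
       (∀ x ∈ A, ∀ y ∈ A, x < y → f (Equiv.swap a1 a2 y) < f (Equiv.swap a1 a2 x) →
          g (Equiv.swap a1 a2 x) < g (Equiv.swap a1 a2 y) → False)) := by
  have t1 : Equiv.swap a1 a2 a1 = a2 := Equiv.swap_apply_left a1 a2
  have t2 : Equiv.swap a1 a2 a2 = a1 := Equiv.swap_apply_right a1 a2
  have tx : ∀ z, z ≠ a1 → z ≠ a2 → Equiv.swap a1 a2 z = z := fun z h1 h2 =>
    Equiv.swap_apply_of_ne_of_ne h1 h2
  constructor
  · intro hst
    constructor
    · intro x hx h1 h2 h3 h4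
      have hx1 : x ≠ a1 := ne_of_gt h1
      have hx2 : x ≠ a2 := ne_of_lt h2
      have hgx1 : g x < g a1 := by
        rcases lt_trichotomy (g x) (g a1) with h | h | h
        · exact h
        · exact absurd (injg hx ha1 h) hx1
        · exact (hnd a1 ha1 x hx h1 h4 h).elim
      have hgx2 : g a2 < g x := by
        rcases lt_trichotomy (g x) (g a2) with h | h | h
        · exact (hnd x hx a2 ha2 h2 h3 h).elim
        · exact absurd (injg hx ha2 h) hx2
        · exact h
      exact hst x hx h1 h2 hgx2 hgx1
    · intro x hx y hy hxy hfτ hgτ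
      rcases eq_or_ne a1 x with rfl | ne1
      · rcases eq_or_ne a2 y with rfl | ne2
        · rw [t1, t2] at hfτ
          exact lt_asymm hf hfτ
        · have hy2 : y ≠ a2 := ne2.symm
          have hy1 : y ≠ a1 := ne_of_gt hxy
          rw [t1, tx y hy1 hy2] at hfτ hgτ
          rcases hy2.lt_or_gt with hlt | hgt
          · have h5 : g y < g a1 := by
              rcases lt_trichotomy (g y) (g a1) with h | h | h
              · exact h
              · exact absurd (injg hy ha1 h) hy1
              · exact (hnd a1 ha1 y hy hxy (hfτ.trans hf) h).elim
            exact hst y hy hxy hlt hgτ h5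
          · exact hnd a2 ha2 y hy hgt hfτ hgτ
      · have hx1 : x ≠ a1 := ne1.symm
        rcases eq_or_ne a2 x with rfl | ne2
        · have hy2 : y ≠ a2 := ne_of_gt hxy
          have hy1 : y ≠ a1 := ne_of_gt (h12.trans hxy)
          rw [t2, tx y hy1 hy2] at hfτ hgτ
          exact hnd a1 ha1 y hy (h12.trans hxy) hfτ hgτ
        · have hx2 : x ≠ a2 := ne2.symm
          rcases eq_or_ne a1 y with rfl | ne3
          · rw [t1, tx x hx1 hx2] at hfτ hgτ
            exact hnd x hx a2 ha2 (hxy.trans h12) hfτ hgτ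
          · have hy1 : y ≠ a1 := ne3.symm
            rcases eq_or_ne a2 y with rfl | ne4
            · rw [t2, tx x hx1 hx2] at hfτ hgτ
              rcases hx1.lt_or_gt with hlt | hgt
              · exact hnd x hx a1 ha1 hlt hfτ hgτ
              · rcases lt_trichotomy (g x) (g a2) with h | h | h
                · exact hnd x hx a2 ha2 hxy (hf.trans hfτ) h
                · exact absurd (injg hx ha2 h) hx2
                · exact hst x hx hgt hxy h hgτ
            · have hy2 : y ≠ a2 := ne4.symm
              rw [tx x hx1 hx2, tx y hy1 hy2] at hfτ hgτ
              exact hnd x hx y hy hxy hfτ hgτ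
  · rintro ⟨hsr, hnd'⟩ x hx h1 h2 h3 h4
    have hx1 : x ≠ a1 := ne_of_gt h1
    have hx2 : x ≠ a2 := ne_of_lt h2
    rcases lt_trichotomy (f x) (f a2) with hlt | heq | hgt
    · refine hnd' a1 ha1 x hx h1 ?_ ?_
      · rw [t1, tx x hx1 hx2]; exact hlt
      · rw [t1, tx x hx1 hx2]; exact h3
    · exact absurd (injf hx ha2 heq) hx2
    · rcases lt_trichotomy (f x) (f a1) with hlt' | heq' | hgt'
      · exact hsr x hx h1 h2 hgt hlt'
      · exact absurd (injf hx ha1 heq') hx1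
      · refine hnd' x hx a2 ha2 h2 ?_ ?_
        · rw [t2, tx x hx1 hx2]; exact hgt'
        · rw [t2, tx x hx1 hx2]; exact h4

end Logic
section Logic2
variable {α : Type*} [LinearOrder α] [DecidableEq α] {A : Finset α} {f g : α → α} {a1 a2 : α}

/-- t-side equivalence for a non-double crossing of `t` (over positions `a1 < a2`,
with `f a1 < f a2` and `g a2 < g a1`). -/
theorem lemEt (injf : Set.InjOn f A) (injg : Set.InjOn g A)
    (ha1 : a1 ∈ A) (ha2 : a2 ∈ A) (h12 : a1 < a2) (hf : f a1 < f a2) (hg : g a2 < g a1)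
    (hnd : ∀ x ∈ A, ∀ y ∈ A, x < y → f y < f x → g x < g y → False) :
    (∀ x ∈ A, a1 < x → x < a2 → g a2 < g x → g x < g a1 → False) ↔
      ((∀ x ∈ A, f a1 < f x → f x < f a2 → g a2 < g x → g x < g a1 → False) ∧
       (∀ x ∈ A, ∀ y ∈ A, x < y → f y < f x →
          g (Equiv.swap a1 a2 x) < g (Equiv.swap a1 a2 y) → False)) := by
  have t1 : Equiv.swap a1 a2 a1 = a2 := Equiv.swap_apply_left a1 a2
  have t2 : Equiv.swap a1 a2 a2 = a1 := Equiv.swap_apply_right a1 a2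
  have tx : ∀ z, z ≠ a1 → z ≠ a2 → Equiv.swap a1 a2 z = z := fun z h1 h2 =>
    Equiv.swap_apply_of_ne_of_ne h1 h2
  constructor
  · intro hst
    constructor
    · -- TRect
      intro x hx h1 h2 h3 h4
      have hx1 : x ≠ a1 := by rintro rfl; exact lt_irrefl _ h1
      have hx2 : x ≠ a2 := by rintro rfl; exact lt_irrefl _ h2
      rcases lt_trichotomy x a1 with hlt | heq | hgt
      · exact hnd x hx a1 ha1 hlt h1 h4
      · exact hx1 heq
      · rcases lt_trichotomy x a2 with hlt' | heq' | hgt'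
        · exact hst x hx hgt hlt' h3 h4
        · exact hx2 heq'
        · exact hnd a2 ha2 x hx hgt' h2 h3
    · -- NoDbl'
      intro x hx y hy hxy hfxy hgτ
      rcases eq_or_ne a1 x with rfl | ne1
      · rcases eq_or_ne a2 y with rfl | ne2
        · exact lt_asymm hf hfxy
        · have hy2 : y ≠ a2 := ne2.symm
          have hy1 : y ≠ a1 := ne_of_gt hxy
          rw [t1, tx y hy1 hy2] at hgτ
          rcases hy2.lt_or_gt with hlt | hgt
          · rcases lt_trichotomy (g y) (g a1) with h | h | h
            · exact hst y hy hxy hlt hgτ h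
            · exact absurd (injg hy ha1 h) hy1
            · exact hnd a1 ha1 y hy hxy hfxy h
          · exact hnd a2 ha2 y hy hgt (hfxy.trans hf) hgτ
      · have hx1 : x ≠ a1 := ne1.symm
        rcases eq_or_ne a2 x with rfl | ne2
        · have hy2 : y ≠ a2 := ne_of_gt hxy
          have hy1 : y ≠ a1 := ne_of_gt (h12.trans hxy)
          rw [t2, tx y hy1 hy2] at hgτ
          exact hnd a2 ha2 y hy hxy hfxy (hg.trans hgτ)
        · have hx2 : x ≠ a2 := ne2.symm
          rcases eq_or_ne a1 y with rfl | ne3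
          · rw [t1, tx x hx1 hx2] at hgτ
            exact hnd x hx a1 ha1 hxy hfxy (hgτ.trans hg)
          · have hy1 : y ≠ a1 := ne3.symm
            rcases eq_or_ne a2 y with rfl | ne4
            · rw [t2, tx x hx1 hx2] at hgτ
              rcases hx1.lt_or_gt with hlt | hgt
              · exact hnd x hx a1 ha1 hlt (hf.trans hfxy) hgτ
              · rcases lt_trichotomy (g x) (g a2) with h | h | h
                · exact hnd x hx a2 ha2 hxy hfxy h
                · exact absurd (injg hx ha2 h) hx2
                · exact hst x hx hgt hxy h hgτ
            · have hy2 : y ≠ a2 := ne4.symm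
              rw [tx x hx1 hx2, tx y hy1 hy2] at hgτ
              exact hnd x hx y hy hxy hfxy hgτ
  · rintro ⟨htr, hnd'⟩ x hx h1 h2 h3 h4
    have hx1 : x ≠ a1 := ne_of_gt h1
    have hx2 : x ≠ a2 := ne_of_lt h2
    rcases lt_trichotomy (f x) (f a1) with hlt | heq | hgt
    · refine hnd' a1 ha1 x hx h1 hlt ?_
      rw [t1, tx x hx1 hx2]; exact h3
    · exact absurd (injf hx ha1 heq) hx1
    · rcases lt_trichotomy (f x) (f a2) with hlt' | heq' | hgt'
      · exact htr x hx hgt hlt' h3 h4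
      · exact absurd (injf hx ha2 heq') hx2
      · refine hnd' x hx a2 ha2 h2 hgt' ?_
        rw [t2, tx x hx1 hx2]; exact h4

/-- If resolving a **non-double** crossing of `s` leaves an empty rectangle and creates
no double crossing with `t`, then `(s,t)` had no double crossings at all. -/
theorem lemAs (injf : Set.InjOn f A) (injg : Set.InjOn g A)
    (ha1 : a1 ∈ A) (ha2 : a2 ∈ A) (h12 : a1 < a2) (hf : f a2 < f a1) (hgr : g a2 < g a1)
    (hsr : ∀ x ∈ A, a1 < x → x < a2 → f a2 < f x → f x < f a1 → False)
    (hnd' : ∀ x ∈ A, ∀ y ∈ A, x < y → f (Equiv.swap a1 a2 y) < f (Equiv.swap a1 a2 x) →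
        g (Equiv.swap a1 a2 x) < g (Equiv.swap a1 a2 y) → False) :
    ∀ x ∈ A, ∀ y ∈ A, x < y → f y < f x → g x < g y → False := by
  have t1 : Equiv.swap a1 a2 a1 = a2 := Equiv.swap_apply_left a1 a2
  have t2 : Equiv.swap a1 a2 a2 = a1 := Equiv.swap_apply_right a1 a2
  have tx : ∀ z, z ≠ a1 → z ≠ a2 → Equiv.swap a1 a2 z = z := fun z h1 h2 =>
    Equiv.swap_apply_of_ne_of_ne h1 h2
  intro x hx y hy hxy hfxy hgxy
  rcases eq_or_ne a1 x with rfl | ne1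
  · rcases eq_or_ne a2 y with rfl | ne2
    · exact lt_asymm hgr hgxy
    · have hy2 : y ≠ a2 := ne2.symm
      have hy1 : y ≠ a1 := ne_of_gt hxy
      rcases hy2.lt_or_gt with hlt | hgt
      · rcases lt_trichotomy (f y) (f a2) with h | h | h
        · refine hnd' a1 ha1 y hy hxy ?_ ?_
          · rw [t1, tx y hy1 hy2]; exact h
          · rw [t1, tx y hy1 hy2]; exact hgr.trans hgxy
        · exact absurd (injf hy ha2 h) hy2
        · exact hsr y hy hxy hlt h hfxy
      · refine hnd' a2 ha2 y hy hgt ?_ ?_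
        · rw [t2, tx y hy1 hy2]; exact hfxy
        · rw [t2, tx y hy1 hy2]; exact hgxy
  · have hx1 : x ≠ a1 := ne1.symm
    rcases eq_or_ne a2 x with rfl | ne2
    · have hy2 : y ≠ a2 := ne_of_gt hxy
      have hy1 : y ≠ a1 := ne_of_gt (h12.trans hxy)
      refine hnd' a1 ha1 y hy (h12.trans hxy) ?_ ?_
      · rw [t1, tx y hy1 hy2]; exact hfxy
      · rw [t1, tx y hy1 hy2]; exact hgxy
    · have hx2 : x ≠ a2 := ne2.symm
      rcases eq_or_ne a1 y with rfl | ne3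
      · refine hnd' x hx a2 ha2 (hxy.trans h12) ?_ ?_
        · rw [t2, tx x hx1 hx2]; exact hfxy
        · rw [t2, tx x hx1 hx2]; exact hgxy
      · have hy1 : y ≠ a1 := ne3.symm
        rcases eq_or_ne a2 y with rfl | ne4
        · rcases hx1.lt_or_gt with hlt | hgt
          · refine hnd' x hx a1 ha1 hlt ?_ ?_
            · rw [t1, tx x hx1 hx2]; exact hfxy
            · rw [t1, tx x hx1 hx2]; exact hgxy
          · rcases lt_trichotomy (f x) (f a1) with h | h | h
            · exact hsr x hx hgt hxy hfxy h
            · exact absurd (injf hx ha1 h) hx1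
            · refine hnd' x hx a2 ha2 hxy ?_ ?_
              · rw [t2, tx x hx1 hx2]; exact h
              · rw [t2, tx x hx1 hx2]; exact hgxy.trans hgr
        · have hy2 : y ≠ a2 := ne4.symm
          refine hnd' x hx y hy hxy ?_ ?_
          · rw [tx x hx1 hx2, tx y hy1 hy2]; exact hfxy
          · rw [tx x hx1 hx2, tx y hy1 hy2]; exact hgxy

/-- t-side analogue of `lemAs`, for a non-double crossing of `t`. -/
theorem lemAt (injf : Set.InjOn f A) (injg : Set.InjOn g A)
    (ha1 : a1 ∈ A) (ha2 : a2 ∈ A) (h12 : a1 < a2) (hf : f a1 < f a2) (hg : g a2 < g a1)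
    (htr : ∀ x ∈ A, f a1 < f x → f x < f a2 → g a2 < g x → g x < g a1 → False)
    (hnd' : ∀ x ∈ A, ∀ y ∈ A, x < y → f y < f x →
        g (Equiv.swap a1 a2 x) < g (Equiv.swap a1 a2 y) → False) :
    ∀ x ∈ A, ∀ y ∈ A, x < y → f y < f x → g x < g y → False := by
  have t1 : Equiv.swap a1 a2 a1 = a2 := Equiv.swap_apply_left a1 a2
  have t2 : Equiv.swap a1 a2 a2 = a1 := Equiv.swap_apply_right a1 a2
  have tx : ∀ z, z ≠ a1 → z ≠ a2 → Equiv.swap a1 a2 z = z := fun z h1 h2 =>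
    Equiv.swap_apply_of_ne_of_ne h1 h2
  intro x hx y hy hxy hfxy hgxy
  rcases eq_or_ne a1 x with rfl | ne1
  · rcases eq_or_ne a2 y with rfl | ne2
    · exact lt_asymm hf hfxy
    · have hy2 : y ≠ a2 := ne2.symm
      have hy1 : y ≠ a1 := ne_of_gt hxy
      refine hnd' a1 ha1 y hy hxy hfxy ?_
      rw [t1, tx y hy1 hy2]; exact hg.trans hgxy
  · have hx1 : x ≠ a1 := ne1.symm
    rcases eq_or_ne a2 x with rfl | ne2
    · have hy2 : y ≠ a2 := ne_of_gt hxy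
      have hy1 : y ≠ a1 := ne_of_gt (h12.trans hxy)
      rcases lt_trichotomy (f y) (f a1) with h | h | h
      · refine hnd' a1 ha1 y hy (h12.trans hxy) h ?_
        rw [t1, tx y hy1 hy2]; exact hgxy
      · exact absurd (injf hy ha1 h) hy1
      · rcases lt_trichotomy (g y) (g a1) with h' | h' | h'
        · exact htr y hy h hfxy hgxy h'
        · exact absurd (injg hy ha1 h') hy1
        · refine hnd' a2 ha2 y hy hxy hfxy ?_
          rw [t2, tx y hy1 hy2]; exact h'
    · have hx2 : x ≠ a2 := ne2.symm
      rcases eq_or_ne a1 y with rfl | ne3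
      · rcases lt_trichotomy (f x) (f a2) with h | h | h
        · rcases lt_trichotomy (g x) (g a2) with h' | h' | h'
          · refine hnd' x hx a1 ha1 hxy hfxy ?_
            rw [t1, tx x hx1 hx2]; exact h'
          · exact absurd (injg hx ha2 h') hx2
          · exact htr x hx hfxy h h' hgxy
        · exact absurd (injf hx ha2 h) hx2
        · refine hnd' x hx a2 ha2 (hxy.trans h12) h ?_
          rw [t2, tx x hx1 hx2]; exact hgxy
      · have hy1 : y ≠ a1 := ne3.symm
        rcases eq_or_ne a2 y with rfl | ne4
        · rcases hx1.lt_or_gt with hlt | hgt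
          · refine hnd' x hx a1 ha1 hlt (hf.trans hfxy) ?_
            rw [t1, tx x hx1 hx2]; exact hgxy
          · refine hnd' x hx a2 ha2 hxy hfxy ?_
            rw [t2, tx x hx1 hx2]; exact hgxy.trans hg
        · have hy2 : y ≠ a2 := ne4.symm
          refine hnd' x hx y hy hxy hfxy ?_
          rw [tx x hx1 hx2, tx y hy1 hy2]; exact hgxy

end Logic2
section Logic3
variable {α : Type*} [LinearOrder α] [DecidableEq α] {A : Finset α} {f g : α → α} {a1 a2 : α}

/-- For a **double** crossing pair `(a1,a2)` (i.e. `a1<a2`, `f a2<f a1`, `g a1<g a2`),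
resolving it in `s` survives iff resolving the corresponding crossing in `t` survives. -/
theorem lemB (injf : Set.InjOn f A) (injg : Set.InjOn g A)
    (ha1 : a1 ∈ A) (ha2 : a2 ∈ A) (h12 : a1 < a2) (hf : f a2 < f a1) (hg : g a1 < g a2) :
    ((∀ x ∈ A, a1 < x → x < a2 → f a2 < f x → f x < f a1 → False) ∧
     (∀ x ∈ A, ∀ y ∈ A, x < y → f (Equiv.swap a1 a2 y) < f (Equiv.swap a1 a2 x) →
        g (Equiv.swap a1 a2 x) < g (Equiv.swap a1 a2 y) → False)) ↔
    ((∀ x ∈ A, f a2 < f x → f x < f a1 → g a1 < g x → g x < g a2 → False) ∧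
     (∀ x ∈ A, ∀ y ∈ A, x < y → f y < f x →
        g (Equiv.swap a1 a2 x) < g (Equiv.swap a1 a2 y) → False)) := by
  have t1 : Equiv.swap a1 a2 a1 = a2 := Equiv.swap_apply_left a1 a2
  have t2 : Equiv.swap a1 a2 a2 = a1 := Equiv.swap_apply_right a1 a2
  have tx : ∀ z, z ≠ a1 → z ≠ a2 → Equiv.swap a1 a2 z = z := fun z h1 h2 =>
    Equiv.swap_apply_of_ne_of_ne h1 h2
  constructor
  · rintro ⟨hsr, hnds⟩
    constructor
    · -- TRectD
      intro x hx h1 h2 h3 h4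
      have hx1 : x ≠ a1 := by rintro rfl; exact lt_irrefl _ h2
      have hx2 : x ≠ a2 := by rintro rfl; exact lt_irrefl _ h1
      rcases lt_trichotomy x a1 with hlt | heq | hgt
      · refine hnds x hx a1 ha1 hlt ?_ ?_
        · rw [t1, tx x hx1 hx2]; exact h1
        · rw [t1, tx x hx1 hx2]; exact h4
      · exact hx1 heq
      · rcases lt_trichotomy x a2 with hlt' | heq' | hgt'
        · exact hsr x hx hgt hlt' h1 h2
        · exact hx2 heq'
        · refine hnds a2 ha2 x hx hgt' ?_ ?_
          · rw [t2, tx x hx1 hx2]; exact h2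
          · rw [t2, tx x hx1 hx2]; exact h3
    · -- NDt'
      intro x hx y hy hxy hfxy hgτ
      rcases eq_or_ne a1 x with rfl | ne1
      · rcases eq_or_ne a2 y with rfl | ne2
        · rw [t1, t2] at hgτ
          exact lt_asymm hg hgτ
        · have hy2 : y ≠ a2 := ne2.symm
          have hy1 : y ≠ a1 := ne_of_gt hxy
          rw [t1, tx y hy1 hy2] at hgτ
          rcases lt_trichotomy (f y) (f a2) with h | h | h
          · refine hnds a1 ha1 y hy hxy ?_ ?_
            · rw [t1, tx y hy1 hy2]; exact h
            · rw [t1, tx y hy1 hy2]; exact hgτ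
          · exact absurd (injf hy ha2 h) hy2
          · rcases hy2.lt_or_gt with hlt | hgt
            · exact hsr y hy hxy hlt h hfxy
            · refine hnds a2 ha2 y hy hgt ?_ ?_
              · rw [t2, tx y hy1 hy2]; exact hfxy
              · rw [t2, tx y hy1 hy2]; exact hg.trans hgτ
      · have hx1 : x ≠ a1 := ne1.symm
        rcases eq_or_ne a2 x with rfl | ne2
        · have hy2 : y ≠ a2 := ne_of_gt hxy
          have hy1 : y ≠ a1 := ne_of_gt (h12.trans hxy)
          rw [t2, tx y hy1 hy2] at hgτ
          refine hnds a2 ha2 y hy hxy ?_ ?_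
          · rw [t2, tx y hy1 hy2]; exact hfxy.trans hf
          · rw [t2, tx y hy1 hy2]; exact hgτ
        · have hx2 : x ≠ a2 := ne2.symm
          rcases eq_or_ne a1 y with rfl | ne3
          · rw [tx x hx1 hx2, t1] at hgτ
            refine hnds x hx a1 ha1 hxy ?_ ?_
            · rw [t1, tx x hx1 hx2]; exact hf.trans hfxy
            · rw [t1, tx x hx1 hx2]; exact hgτ
          · have hy1 : y ≠ a1 := ne3.symm
            rcases eq_or_ne a2 y with rfl | ne4
            · rw [tx x hx1 hx2, t2] at hgτ
              rcases lt_trichotomy (f a1) (f x) with h | h | h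
              · refine hnds x hx a2 ha2 hxy ?_ ?_
                · rw [t2, tx x hx1 hx2]; exact h
                · rw [t2, tx x hx1 hx2]; exact hgτ
              · exact absurd (injf ha1 hx h) hx1.symm
              · rcases hx1.lt_or_gt with hlt | hgt
                · refine hnds x hx a1 ha1 hlt ?_ ?_
                  · rw [t1, tx x hx1 hx2]; exact hfxy
                  · rw [t1, tx x hx1 hx2]; exact hgτ.trans hg
                · exact hsr x hx hgt hxy hfxy h
            · have hy2 : y ≠ a2 := ne4.symm
              rw [tx x hx1 hx2, tx y hy1 hy2] at hgτ
              refine hnds x hx y hy hxy ?_ ?_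
              · rw [tx x hx1 hx2, tx y hy1 hy2]; exact hfxy
              · rw [tx x hx1 hx2, tx y hy1 hy2]; exact hgτ
  · rintro ⟨htr, hndt⟩
    constructor
    · -- SRect
      intro x hx h1 h2 h3 h4
      have hx1 : x ≠ a1 := ne_of_gt h1
      have hx2 : x ≠ a2 := ne_of_lt h2
      rcases lt_trichotomy (g x) (g a1) with hlt | heq | hgt
      · refine hndt x hx a2 ha2 h2 h3 ?_
        rw [t2, tx x hx1 hx2]; exact hlt
      · exact absurd (injg hx ha1 heq) hx1
      · rcases lt_trichotomy (g x) (g a2) with hlt' | heq' | hgt'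
        · exact htr x hx h3 h4 hgt hlt'
        · exact absurd (injg hx ha2 heq') hx2
        · refine hndt a1 ha1 x hx h1 h4 ?_
          rw [t1, tx x hx1 hx2]; exact hgt'
    · -- NDs'
      intro x hx y hy hxy hfτ hgτ
      rcases eq_or_ne a1 x with rfl | ne1
      · rcases eq_or_ne a2 y with rfl | ne2
        · rw [t1, t2] at hfτ
          exact lt_asymm hf hfτ
        · have hy2 : y ≠ a2 := ne2.symm
          have hy1 : y ≠ a1 := ne_of_gt hxy
          rw [t1, tx y hy1 hy2] at hfτ
          exact hndt a1 ha1 y hy hxy (hfτ.trans hf) hgτ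
      · have hx1 : x ≠ a1 := ne1.symm
        rcases eq_or_ne a2 x with rfl | ne2
        · have hy2 : y ≠ a2 := ne_of_gt hxy
          have hy1 : y ≠ a1 := ne_of_gt (h12.trans hxy)
          rw [t2, tx y hy1 hy2] at hfτ
          have hg2 : g a1 < g y := by
            have h := hgτ; rw [t2, tx y hy1 hy2] at h; exact h
          rcases lt_trichotomy (f y) (f a2) with h | h | h
          · exact hndt a2 ha2 y hy hxy h hgτ
          · exact absurd (injf hy ha2 h) hy2
          · rcases lt_trichotomy (g y) (g a2) with h' | h' | h'
            · exact htr y hy h hfτ hg2 h'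
            · exact absurd (injg hy ha2 h') hy2
            · refine hndt a1 ha1 y hy (h12.trans hxy) hfτ ?_
              rw [t1, tx y hy1 hy2]; exact h'
        · have hx2 : x ≠ a2 := ne2.symm
          rcases eq_or_ne a1 y with rfl | ne3
          · rw [t1, tx x hx1 hx2] at hfτ hgτ
            rcases lt_trichotomy (f a1) (f x) with h | h | h
            · refine hndt x hx a1 ha1 hxy h ?_
              rw [t1, tx x hx1 hx2]; exact hgτ
            · exact absurd (injf ha1 hx h) hx1.symm
            · rcases lt_trichotomy (g a1) (g x) with h' | h' | h'
              · exact htr x hx hfτ h h' hgτ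
              · exact absurd (injg ha1 hx h') hx1.symm
              · refine hndt x hx a2 ha2 (hxy.trans h12) hfτ ?_
                rw [t2, tx x hx1 hx2]; exact h'
          · have hy1 : y ≠ a1 := ne3.symm
            rcases eq_or_ne a2 y with rfl | ne4
            · rw [t2, tx x hx1 hx2] at hfτ hgτ
              refine hndt x hx a2 ha2 hxy (hf.trans hfτ) ?_
              rw [t2, tx x hx1 hx2]; exact hgτ
            · have hy2 : y ≠ a2 := ne4.symm
              rw [tx x hx1 hx2, tx y hy1 hy2] at hfτ hgτ
              refine hndt x hx y hy hxy hfτ ?_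
              rw [tx x hx1 hx2, tx y hy1 hy2]; exact hgτ

end Logic3
section Counting
variable {α : Type*} [LinearOrder α] [DecidableEq α]

theorem swap_mem_of_mem {A : Finset α} {a1 a2 x : α} (ha1 : a1 ∈ A) (ha2 : a2 ∈ A)
    (hx : x ∈ A) : Equiv.swap a1 a2 x ∈ A := by
  rcases eq_or_ne x a1 with rfl | h1
  · rwa [Equiv.swap_apply_left]
  · rcases eq_or_ne x a2 with rfl | h2
    · rwa [Equiv.swap_apply_right]
    · rwa [Equiv.swap_apply_of_ne_of_ne h1 h2]

theorem sumA_split {M : Type*} [AddCommMonoid M] {A : Finset α} {a1 a2 : α}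
    (ha1 : a1 ∈ A) (ha2 : a2 ∈ A) (hne : a1 ≠ a2) (h : α → M) :
    ∑ x ∈ A, h x = h a1 + h a2 + ∑ x ∈ (A.erase a1).erase a2, h x := by
  have ha2' : a2 ∈ A.erase a1 := Finset.mem_erase.2 ⟨hne.symm, ha2⟩
  rw [← Finset.add_sum_erase _ h ha1, ← Finset.add_sum_erase _ h ha2', add_assoc]

/-- The crossing count of `s` with one crossing `(a1,a2)` resolved:
it drops by `1 + 2·(number of strands in the rectangle)`. -/
theorem crN_exchange {A : Finset α} {f : α → α} (injf : Set.InjOn f A) {a1 a2 : α}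
    (ha1 : a1 ∈ A) (ha2 : a2 ∈ A) (h12 : a1 < a2) (hf : f a2 < f a1) :
    crN A (fun x => f (Equiv.swap a1 a2 x)) + 1 + 2 * RN A f a1 a2 = crN A f := by
  classical
  set τ := Equiv.swap a1 a2 with hτ
  have hne : a1 ≠ a2 := ne_of_lt h12
  set A' := (A.erase a1).erase a2 with hA'
  have memA' : ∀ x, x ∈ A' → x ∈ A ∧ x ≠ a1 ∧ x ≠ a2 := by
    intro x hx
    simp only [hA', Finset.mem_erase] at hx
    exact ⟨hx.2.2, hx.2.1, hx.1⟩
  -- reindex the exchanged crossing count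
  have step1 : crN A (fun x => f (τ x)) =
      ((A ×ˢ A).filter fun p => τ p.1 < τ p.2 ∧ f p.2 < f p.1).card := by
    unfold crN
    apply Finset.card_nbij' (fun p => (τ p.1, τ p.2)) (fun p => (τ p.1, τ p.2))
    · intro p hp
      simp only [Finset.mem_coe, Finset.mem_filter, Finset.mem_product] at hp ⊢
      obtain ⟨⟨m1, m2⟩, hc1, hc2⟩ := hp
      refine ⟨⟨swap_mem_of_mem ha1 ha2 m1, swap_mem_of_mem ha1 ha2 m2⟩, ?_, ?_⟩
      · simpa [hτ] using hc1
      · simpa [hτ] using hc2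
    · intro p hp
      simp only [Finset.mem_coe, Finset.mem_filter, Finset.mem_product] at hp ⊢
      obtain ⟨⟨m1, m2⟩, hc1, hc2⟩ := hp
      exact ⟨⟨swap_mem_of_mem ha1 ha2 m1, swap_mem_of_mem ha1 ha2 m2⟩, by simpa [hτ] using hc1,
        by simpa [hτ] using hc2⟩
    · intro p hp; simp [hτ]
    · intro p hp; simp [hτ]
  set F : α → α → ℕ := fun x y => if x < y ∧ f y < f x then 1 else 0 with hF
  set G : α → α → ℕ := fun x y => if τ x < τ y ∧ f y < f x then 1 else 0 with hG
  set rect : α → ℕ := fun x => if (a1 < x ∧ x < a2) ∧ f a2 < f x ∧ f x < f a1 then 1 else 0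
    with hrect
  have t1 : τ a1 = a2 := Equiv.swap_apply_left a1 a2
  have t2 : τ a2 = a1 := Equiv.swap_apply_right a1 a2
  have tx : ∀ z, z ≠ a1 → z ≠ a2 → τ z = z := fun z h1 h2 =>
    Equiv.swap_apply_of_ne_of_ne h1 h2
  -- row computations
  have rowsplit : ∀ h : α → ℕ, ∑ x ∈ A, h x = h a1 + h a2 + ∑ x ∈ A', h x :=
    fun h => sumA_split ha1 ha2 hne h
  have ecr : crN A f = ∑ x ∈ A, ∑ y ∈ A, F x y := by
    unfold crN
    rw [Finset.card_filter, Finset.sum_product]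
  have ecr' : crN A (fun x => f (τ x)) = ∑ x ∈ A, ∑ y ∈ A, G x y := by
    rw [step1, Finset.card_filter, Finset.sum_product]
  have hQ : RN A f a1 a2 = ∑ x ∈ A', rect x := by
    have h0 : RN A f a1 a2 = ∑ x ∈ A, rect x := by
      unfold RN
      rw [Finset.card_filter]
    rw [h0, rowsplit rect]
    have e1 : rect a1 = 0 := by simp [hrect]
    have e2 : rect a2 = 0 := by simp [hrect]
    rw [e1, e2]
    omega
  -- per-row identities
  have row1 : ∀ x ∈ A', (∑ y ∈ A, F x y) = (∑ y ∈ A, G x y) + rect x := by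
    intro x hx
    obtain ⟨hxA, hx1, hx2⟩ := memA' x hx
    have hfne1 : f x ≠ f a1 := fun h => hx1 (injf hxA ha1 h)
    have hfne2 : f x ≠ f a2 := fun h => hx2 (injf hxA ha2 h)
    rw [rowsplit (F x), rowsplit (G x)]
    have hrest : ∑ y ∈ A', F x y = ∑ y ∈ A', G x y := by
      refine Finset.sum_congr rfl fun y hy => ?_
      obtain ⟨hyA, hy1, hy2⟩ := memA' y hy
      simp [hF, hG, tx x hx1 hx2, tx y hy1 hy2]
    rw [hrest]
    have key : F x a1 + F x a2 = G x a1 + G x a2 + rect x := by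
      simp only [hF, hG, hrect, t1, t2, tx x hx1 hx2]
      rcases hx1.lt_or_gt with p1 | p1
      · have p2 : x < a2 := p1.trans h12
        simp [p1, p2, asymm p1]
      · rcases hx2.lt_or_gt with p2 | p2
        · rcases hfne1.lt_or_gt with q1 | q1
          · rcases hfne2.lt_or_gt with q2 | q2
            · simp [p1, p2, q1, q2, asymm p1, asymm q1, asymm q2]
            · simp [p1, p2, q1, q2, asymm p1, asymm q1, asymm q2]
          · have q2 : f a2 < f x := hf.trans q1
            simp [p1, p2, q1, q2, asymm p1, asymm q1, asymm q2]
        · have p1' : a1 < x := h12.trans p2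
          simp [p1', p2, asymm p1', asymm p2]
    omega
  have row2 : (∑ y ∈ A, F a1 y) =
      (∑ y ∈ A, G a1 y) + 1 + ∑ y ∈ A', (if (a1 < y ∧ y < a2) ∧ f y < f a1 then 1 else 0) := by
    rw [rowsplit (F a1), rowsplit (G a1)]
    have e1 : F a1 a1 = 0 := by simp [hF]
    have e2 : F a1 a2 = 1 := by simp [hF, h12, hf]
    have e3 : G a1 a1 = 0 := by simp [hG]
    have e4 : G a1 a2 = 0 := by simp [hG, t1, t2, asymm h12]
    have hrest : ∑ y ∈ A', F a1 y =
        (∑ y ∈ A', G a1 y) + ∑ y ∈ A', (if (a1 < y ∧ y < a2) ∧ f y < f a1 then 1 else 0) := by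
      rw [← Finset.sum_add_distrib]
      refine Finset.sum_congr rfl fun y hy => ?_
      obtain ⟨hyA, hy1, hy2⟩ := memA' y hy
      simp only [hF, hG, t1, tx y hy1 hy2]
      rcases hy1.lt_or_gt with p1 | p1
      · have p2 : y < a2 := p1.trans h12
        simp [p1, p2, asymm p1, asymm p2]
      · rcases hy2.lt_or_gt with p2 | p2
        · simp [p1, p2, asymm p2]
        · simp [p1, p2, asymm p2, h12.trans p2]
    rw [e1, e2, e3, e4, hrest]
    omega
  have row3 : (∑ y ∈ A, G a2 y) =
      (∑ y ∈ A, F a2 y) + ∑ y ∈ A', (if (a1 < y ∧ y < a2) ∧ f y < f a2 then 1 else 0) := by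
    rw [rowsplit (F a2), rowsplit (G a2)]
    have e1 : F a2 a1 = 0 := by simp [hF, asymm h12]
    have e2 : F a2 a2 = 0 := by simp [hF]
    have e3 : G a2 a1 = 0 := by simp [hG, t1, t2, asymm hf]
    have e4 : G a2 a2 = 0 := by simp [hG]
    have hrest : ∑ y ∈ A', G a2 y =
        (∑ y ∈ A', F a2 y) + ∑ y ∈ A', (if (a1 < y ∧ y < a2) ∧ f y < f a2 then 1 else 0) := by
      rw [← Finset.sum_add_distrib]
      refine Finset.sum_congr rfl fun y hy => ?_
      obtain ⟨hyA, hy1, hy2⟩ := memA' y hy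
      simp only [hF, hG, t2, tx y hy1 hy2]
      rcases hy1.lt_or_gt with p1 | p1
      · have p2 : y < a2 := p1.trans h12
        simp [p1, p2, asymm p1, asymm p2]
      · rcases hy2.lt_or_gt with p2 | p2
        · simp [p1, p2, asymm p2]
        · simp [p1, p2, asymm p2]
    rw [e1, e2, e3, e4, hrest]
    omega
  have row4 : (∑ y ∈ A', (if (a1 < y ∧ y < a2) ∧ f y < f a1 then 1 else 0)) =
      (∑ y ∈ A', (if (a1 < y ∧ y < a2) ∧ f y < f a2 then 1 else 0)) + ∑ y ∈ A', rect y := by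
    rw [← Finset.sum_add_distrib]
    refine Finset.sum_congr rfl fun y hy => ?_
    obtain ⟨hyA, hy1, hy2⟩ := memA' y hy
    have hfne1 : f y ≠ f a1 := fun h => hy1 (injf hyA ha1 h)
    have hfne2 : f y ≠ f a2 := fun h => hy2 (injf hyA ha2 h)
    simp only [hrect]
    rcases hfne1.lt_or_gt with q1 | q1
    · rcases hfne2.lt_or_gt with q2 | q2
      · simp [q1, q2, asymm q2]
      · simp [q1, q2, asymm q2]
    · have q2 : f a2 < f y := hf.trans q1
      simp [q1, q2, asymm q1, asymm q2]
  have final1 : ∑ x ∈ A, (∑ y ∈ A, F x y) =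
      (∑ y ∈ A, F a1 y) + (∑ y ∈ A, F a2 y) + ∑ x ∈ A', (∑ y ∈ A, F x y) :=
    rowsplit _
  have final2 : ∑ x ∈ A, (∑ y ∈ A, G x y) =
      (∑ y ∈ A, G a1 y) + (∑ y ∈ A, G a2 y) + ∑ x ∈ A', (∑ y ∈ A, G x y) :=
    rowsplit _
  have final3 : ∑ x ∈ A', (∑ y ∈ A, F x y) =
      (∑ x ∈ A', (∑ y ∈ A, G x y)) + ∑ x ∈ A', rect x := by
    rw [← Finset.sum_add_distrib]
    exact Finset.sum_congr rfl row1
  omega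

end Counting
section Counting2
variable {α : Type*} [LinearOrder α] [DecidableEq α]

theorem sum_swap_pairs {A : Finset α} (F : α × α → ℕ) :
    ∑ p ∈ A ×ˢ A, F p = ∑ p ∈ A ×ˢ A, F (p.2, p.1) := by
  refine Finset.sum_nbij' (fun p => (p.2, p.1)) (fun p => (p.2, p.1)) ?_ ?_ ?_ ?_ ?_
  · intro p hp
    obtain ⟨h1, h2⟩ := Finset.mem_product.1 hp
    exact Finset.mem_product.2 ⟨h2, h1⟩
  · intro p hp
    obtain ⟨h1, h2⟩ := Finset.mem_product.1 hp
    exact Finset.mem_product.2 ⟨h2, h1⟩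
  · intro p _; rfl
  · intro p _; rfl
  · intro p _; rfl

/-- crossing counts add up to the crossing count of the composite plus twice
the number of double crossings. -/
theorem crN_mul {A : Finset α} {f g : α → α} (injf : Set.InjOn f A) (injg : Set.InjOn g A) :
    crN A g + 2 * DN A f g = crN A f + crTN A f g := by
  have key : ∀ p ∈ A ×ˢ A,
      ((if p.1 < p.2 ∧ g p.2 < g p.1 then 1 else 0) +
        (if p.2 < p.1 ∧ g p.1 < g p.2 then 1 else 0))
      + (((if p.1 < p.2 ∧ f p.2 < f p.1 ∧ g p.1 < g p.2 then 1 else 0) +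
          (if p.2 < p.1 ∧ f p.1 < f p.2 ∧ g p.2 < g p.1 then 1 else 0)) +
         ((if p.1 < p.2 ∧ f p.2 < f p.1 ∧ g p.1 < g p.2 then 1 else 0) +
          (if p.2 < p.1 ∧ f p.1 < f p.2 ∧ g p.2 < g p.1 then 1 else 0)))
      = ((if p.1 < p.2 ∧ f p.2 < f p.1 then 1 else 0) +
          (if p.2 < p.1 ∧ f p.1 < f p.2 then 1 else 0))
      + ((if f p.1 < f p.2 ∧ g p.2 < g p.1 then 1 else 0) +
          (if f p.2 < f p.1 ∧ g p.1 < g p.2 then 1 else 0)) := by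
    rintro ⟨x, y⟩ hp
    obtain ⟨hx, hy⟩ := Finset.mem_product.1 hp
    rcases eq_or_ne x y with rfl | hne
    · simp
    · have hfne : f x ≠ f y := fun h => hne (injf hx hy h)
      have hgne : g x ≠ g y := fun h => hne (injg hx hy h)
      rcases hne.lt_or_gt with h | h <;> rcases hfne.lt_or_gt with h2 | h2 <;>
        rcases hgne.lt_or_gt with h3 | h3 <;>
        simp [h, h2, h3, asymm h, asymm h2, asymm h3]
  have sumkey := Finset.sum_congr rfl key
  simp only [Finset.sum_add_distrib] at sumkey
  have e1 : crN A g = ∑ p ∈ A ×ˢ A, (if p.1 < p.2 ∧ g p.2 < g p.1 then 1 else 0) := by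
    unfold crN; rw [Finset.card_filter]
  have e2 : crN A f = ∑ p ∈ A ×ˢ A, (if p.1 < p.2 ∧ f p.2 < f p.1 then 1 else 0) := by
    unfold crN; rw [Finset.card_filter]
  have e3 : crTN A f g = ∑ p ∈ A ×ˢ A, (if f p.1 < f p.2 ∧ g p.2 < g p.1 then 1 else 0) := by
    unfold crTN; rw [Finset.card_filter]
  have e4 : DN A f g =
      ∑ p ∈ A ×ˢ A, (if p.1 < p.2 ∧ f p.2 < f p.1 ∧ g p.1 < g p.2 then 1 else 0) := by
    unfold DN; rw [Finset.card_filter]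
  have s1 : ∑ p ∈ A ×ˢ A, (if p.1 < p.2 ∧ g p.2 < g p.1 then 1 else 0) =
      ∑ p ∈ A ×ˢ A, (if p.2 < p.1 ∧ g p.1 < g p.2 then 1 else 0) :=
    sum_swap_pairs _
  have s2 : ∑ p ∈ A ×ˢ A, (if p.1 < p.2 ∧ f p.2 < f p.1 then 1 else 0) =
      ∑ p ∈ A ×ˢ A, (if p.2 < p.1 ∧ f p.1 < f p.2 then 1 else 0) :=
    sum_swap_pairs _
  have s3 : ∑ p ∈ A ×ˢ A, (if f p.1 < f p.2 ∧ g p.2 < g p.1 then 1 else 0) =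
      ∑ p ∈ A ×ˢ A, (if f p.2 < f p.1 ∧ g p.1 < g p.2 then 1 else 0) :=
    sum_swap_pairs _
  have s4 : ∑ p ∈ A ×ˢ A, (if p.1 < p.2 ∧ f p.2 < f p.1 ∧ g p.1 < g p.2 then 1 else 0) =
      ∑ p ∈ A ×ˢ A, (if p.2 < p.1 ∧ f p.1 < f p.2 ∧ g p.2 < g p.1 then 1 else 0) :=
    sum_swap_pairs _
  omega

theorem crTN_swap {A : Finset α} {f g : α → α} {a1 a2 : α} (ha1 : a1 ∈ A) (ha2 : a2 ∈ A) :
    crTN A (fun x => f (Equiv.swap a1 a2 x)) (fun x => g (Equiv.swap a1 a2 x)) = crTN A f g := by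
  unfold crTN
  apply Finset.card_nbij' (fun p => (Equiv.swap a1 a2 p.1, Equiv.swap a1 a2 p.2))
    (fun p => (Equiv.swap a1 a2 p.1, Equiv.swap a1 a2 p.2))
  · intro p hp
    simp only [Finset.mem_coe, Finset.mem_filter, Finset.mem_product] at hp ⊢
    obtain ⟨⟨m1, m2⟩, hc1, hc2⟩ := hp
    exact ⟨⟨swap_mem_of_mem ha1 ha2 m1, swap_mem_of_mem ha1 ha2 m2⟩, hc1, hc2⟩
  · intro p hp
    simp only [Finset.mem_coe, Finset.mem_filter, Finset.mem_product] at hp ⊢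
    obtain ⟨⟨m1, m2⟩, hc1, hc2⟩ := hp
    refine ⟨⟨swap_mem_of_mem ha1 ha2 m1, swap_mem_of_mem ha1 ha2 m2⟩, ?_, ?_⟩
    · simpa using hc1
    · simpa using hc2
  · intro p hp; simp
  · intro p hp; simp

end Counting2
section Bridge
variable {n : ℕ}

/-- The strand diagram of a function `f` on a domain `A`. -/
def strands (A : Finset (Fin n)) (f : Fin n → Fin n) : StrandDiagram n :=
  A.image fun a => (a, f a)

theorem mem_strands {A : Finset (Fin n)} {f : Fin n → Fin n} {p : Fin n × Fin n} :
    p ∈ strands A f ↔ p.1 ∈ A ∧ p.2 = f p.1 := by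
  obtain ⟨x, y⟩ := p
  unfold strands
  simp only [Finset.mem_image, Prod.mk.injEq]
  constructor
  · rintro ⟨a, ha, rfl, rfl⟩; exact ⟨ha, rfl⟩
  · rintro ⟨h1, h2⟩; exact ⟨x, h1, rfl, h2.symm⟩

theorem image_fst_strands (A : Finset (Fin n)) (f : Fin n → Fin n) :
    (strands A f).image Prod.fst = A := by
  unfold strands
  rw [Finset.image_image]
  exact Finset.image_id

theorem image_snd_strands (A : Finset (Fin n)) (f : Fin n → Fin n) :
    (strands A f).image Prod.snd = A.image f := by
  unfold strands
  rw [Finset.image_image]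
  rfl

theorem strands_congr {A : Finset (Fin n)} {f g : Fin n → Fin n} (h : ∀ a ∈ A, f a = g a) :
    strands A f = strands A g :=
  Finset.image_congr fun a ha => by rw [h a ha]

theorem crossings_strands (A : Finset (Fin n)) (f : Fin n → Fin n) :
    crossings (strands A f) = crN A f := by
  unfold crossings crN
  apply Finset.card_nbij' (fun pq => (pq.1.1, pq.2.1))
    (fun x => ((x.1, f x.1), (x.2, f x.2)))
  · intro p hp
    simp only [Finset.mem_coe, Finset.mem_filter, Finset.mem_product, mem_strands] at hp ⊢
    obtain ⟨⟨⟨m1, e1⟩, ⟨m2, e2⟩⟩, hc1, hc2⟩ := hp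
    refine ⟨⟨m1, m2⟩, hc1, ?_⟩
    rw [← e1, ← e2]; exact hc2
  · intro x hx
    simp only [Finset.mem_coe, Finset.mem_filter, Finset.mem_product, mem_strands] at hx ⊢
    obtain ⟨⟨m1, m2⟩, hc1, hc2⟩ := hx
    exact ⟨⟨⟨m1, by trivial⟩, ⟨m2, by trivial⟩⟩, hc1, hc2⟩
  · intro p hp
    simp only [Finset.mem_coe, Finset.mem_filter, Finset.mem_product, mem_strands] at hp
    obtain ⟨⟨⟨m1, e1⟩, ⟨m2, e2⟩⟩, _, _⟩ := hp
    exact Prod.ext (Prod.ext rfl e1.symm) (Prod.ext rfl e2.symm)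
  · intro x hx; rfl

theorem exchange_strands {A : Finset (Fin n)} {f : Fin n → Fin n} {a1 a2 : Fin n}
    (ha1 : a1 ∈ A) (ha2 : a2 ∈ A) (hne : a1 ≠ a2) (hfne : f a1 ≠ f a2) :
    exchange (strands A f) (a1, f a1) (a2, f a2) =
      strands A (fun x => f (Equiv.swap a1 a2 x)) := by
  unfold exchange
  ext p
  obtain ⟨x, y⟩ := p
  simp only [Finset.mem_union, Finset.mem_sdiff, mem_strands, Finset.mem_insert,
    Finset.mem_singleton, Prod.mk.injEq]
  constructor
  · rintro (⟨⟨hxA, rfl⟩, hnotin⟩ | (⟨rfl, rfl⟩ | ⟨rfl, rfl⟩))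
    · have hx1 : x ≠ a1 := fun h => hnotin (Or.inl ⟨h, by rw [h]⟩)
      have hx2 : x ≠ a2 := fun h => hnotin (Or.inr ⟨h, by rw [h]⟩)
      exact ⟨hxA, by rw [Equiv.swap_apply_of_ne_of_ne hx1 hx2]⟩
    · exact ⟨ha1, by rw [Equiv.swap_apply_left]⟩
    · exact ⟨ha2, by rw [Equiv.swap_apply_right]⟩
  · rintro ⟨hxA, rfl⟩
    rcases eq_or_ne x a1 with rfl | hx1
    · right; left; exact ⟨rfl, by rw [Equiv.swap_apply_left]⟩
    · rcases eq_or_ne x a2 with rfl | hx2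
      · right; right; exact ⟨rfl, by rw [Equiv.swap_apply_right]⟩
      · left
        rw [Equiv.swap_apply_of_ne_of_ne hx1 hx2]
        refine ⟨⟨hxA, rfl⟩, ?_⟩
        rintro (⟨h, -⟩ | ⟨h, -⟩)
        · exact hx1 h
        · exact hx2 h

theorem concat_strands (A : Finset (Fin n)) (f ψ : Fin n → Fin n) :
    concat (strands A f) (strands (A.image f) ψ) = strands A (fun a => ψ (f a)) := by
  unfold concat
  ext p
  obtain ⟨x, y⟩ := p
  simp only [Finset.mem_image, Finset.mem_filter, Finset.mem_product, mem_strands,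
    Prod.mk.injEq]
  constructor
  · rintro ⟨⟨u, v⟩, ⟨⟨⟨hu, hu2⟩, hv, hv2⟩, hmid⟩, he1, he2⟩
    refine ⟨by rw [← he1]; exact hu, ?_⟩
    rw [← he2, hv2, ← hmid, hu2, ← he1]
  · rintro ⟨hxA, rfl⟩
    refine ⟨((x, f x), (f x, ψ (f x))), ⟨⟨⟨hxA, rfl⟩, ?_, rfl⟩, rfl⟩, rfl, rfl⟩
    exact ⟨x, hxA, rfl⟩

theorem image_comp_swap {A : Finset (Fin n)} (f : Fin n → Fin n) {a1 a2 : Fin n}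
    (ha1 : a1 ∈ A) (ha2 : a2 ∈ A) :
    A.image (fun x => f (Equiv.swap a1 a2 x)) = A.image f := by
  ext b
  simp only [Finset.mem_image]
  constructor
  · rintro ⟨a, ha, rfl⟩
    exact ⟨Equiv.swap a1 a2 a, swap_mem_of_mem ha1 ha2 ha, rfl⟩
  · rintro ⟨a, ha, rfl⟩
    refine ⟨Equiv.swap a1 a2 a, swap_mem_of_mem ha1 ha2 ha, ?_⟩
    rw [Equiv.swap_apply_self]

theorem crN_image {A : Finset (Fin n)} {f : Fin n → Fin n} (hinj : Set.InjOn f A)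
    (ψ : Fin n → Fin n) :
    crN (A.image f) ψ = crTN A f (fun a => ψ (f a)) := by
  unfold crN crTN
  symm
  apply Finset.card_bij (fun x _ => (f x.1, f x.2))
  · intro x hx
    simp only [Finset.mem_filter, Finset.mem_product, Finset.mem_image] at hx ⊢
    obtain ⟨⟨m1, m2⟩, hc⟩ := hx
    exact ⟨⟨⟨x.1, m1, rfl⟩, ⟨x.2, m2, rfl⟩⟩, hc⟩
  · intro x hx y hy he
    simp only [Finset.mem_filter, Finset.mem_product] at hx hy
    simp only [Prod.mk.injEq] at he
    have e1 : x.1 = y.1 := hinj hx.1.1 hy.1.1 he.1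
    have e2 : x.2 = y.2 := hinj hx.1.2 hy.1.2 he.2
    exact Prod.ext e1 e2
  · intro q hq
    simp only [Finset.mem_filter, Finset.mem_product, Finset.mem_image] at hq
    obtain ⟨⟨⟨a, ha, hae⟩, ⟨b, hb, hbe⟩⟩, hc1, hc2⟩ := hq
    refine ⟨(a, b), Finset.mem_filter.2 ⟨Finset.mem_product.2 ⟨ha, hb⟩, ?_⟩, ?_⟩
    · dsimp only
      rw [hae, hbe]
      exact ⟨hc1, hc2⟩
    · simp only [Prod.ext_iff]
      exact ⟨hae, hbe⟩

theorem RN_image {A : Finset (Fin n)} {f : Fin n → Fin n} (hinj : Set.InjOn f A)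
    (ψ : Fin n → Fin n) {a1 a2 : Fin n} (ha1 : a1 ∈ A) (ha2 : a2 ∈ A) :
    RN (A.image f) ψ (f a1) (f a2) = RTN A f (fun a => ψ (f a)) a1 a2 := by
  unfold RN RTN
  symm
  apply Finset.card_bij (fun x _ => f x)
  · intro x hx
    simp only [Finset.mem_filter, Finset.mem_image] at hx ⊢
    exact ⟨⟨x, hx.1, rfl⟩, hx.2⟩
  · intro x hx y hy he
    simp only [Finset.mem_filter] at hx hy
    exact hinj hx.1 hy.1 he
  · intro b hb
    simp only [Finset.mem_filter, Finset.mem_image] at hb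
    obtain ⟨⟨a, ha, rfl⟩, hc⟩ := hb
    exact ⟨a, Finset.mem_filter.2 ⟨ha, hc⟩, rfl⟩

theorem isGen_repr {s : StrandDiagram n} (hs : IsGen s) :
    ∃ (A : Finset (Fin n)) (f : Fin n → Fin n), s = strands A f ∧ Set.InjOn f ↑A := by
  classical
  obtain ⟨-, hfst, hsnd⟩ := hs
  have injfst : Set.InjOn Prod.fst (↑s : Set (Fin n × Fin n)) := Finset.card_image_iff.1 hfst
  have injsnd : Set.InjOn Prod.snd (↑s : Set (Fin n × Fin n)) := Finset.card_image_iff.1 hsnd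
  refine ⟨s.image Prod.fst, fun a => if h : ∃ b, (a, b) ∈ s then h.choose else a, ?_, ?_⟩
  · ext p
    obtain ⟨x, y⟩ := p
    rw [mem_strands]
    simp only [Finset.mem_image]
    constructor
    · intro hp
      have hex : ∃ b, (x, b) ∈ s := ⟨y, hp⟩
      refine ⟨⟨(x, y), hp, rfl⟩, ?_⟩
      rw [dif_pos hex]
      have := hex.choose_spec
      have : ((x, y) : Fin n × Fin n) = (x, hex.choose) :=
        injfst hp this rfl
      exact (congrArg Prod.snd this)
    · rintro ⟨⟨⟨u, v⟩, hu, rfl⟩, he⟩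
      have hex : ∃ b, (u, b) ∈ s := ⟨v, hu⟩
      rw [dif_pos hex] at he
      rw [he]
      exact hex.choose_spec
  · intro a ha b hb he
    simp only [Finset.coe_image, Set.mem_image, Finset.mem_coe] at ha hb
    obtain ⟨⟨u, v⟩, hu, hue⟩ := ha
    obtain ⟨⟨u', v'⟩, hu', hue'⟩ := hb
    dsimp at hue hue'
    subst hue hue'
    have hexa : ∃ c, (u, c) ∈ s := ⟨v, hu⟩
    have hexb : ∃ c, (u', c) ∈ s := ⟨v', hu'⟩
    dsimp only at he
    rw [dif_pos hexa, dif_pos hexb] at he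
    have h1 : ((u, hexa.choose) : Fin n × Fin n) ∈ s := hexa.choose_spec
    have h2 : ((u', hexb.choose) : Fin n × Fin n) ∈ s := hexb.choose_spec
    have := injsnd h1 h2 he
    exact congrArg Prod.fst this

end Bridge
section Plumbing
variable {n : ℕ}

theorem finsupp_add_self (v : StrandDiagram n →₀ ZMod 2) : v + v = 0 := by
  ext d
  simp only [Finsupp.add_apply, Finsupp.coe_zero, Pi.zero_apply]
  exact CharTwo.add_self_eq_zero _

theorem mulAlg_zero_left (y : StrandDiagram n →₀ ZMod 2) : mulAlg 0 y = 0 :=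
  Finsupp.sum_zero_index

theorem mulAlg_add_left (x1 x2 y : StrandDiagram n →₀ ZMod 2) :
    mulAlg (x1 + x2) y = mulAlg x1 y + mulAlg x2 y := by
  unfold mulAlg
  apply Finsupp.sum_add_index'
  · intro s
    simp only [zero_mul, zero_smul]
    exact Finset.sum_const_zero
  · intro s b1 b2
    rw [← Finsupp.sum_add]
    congr 1
    ext t ct
    rw [add_mul, add_smul]

theorem mulAlg_sum_left {ι : Type*} (S : Finset ι) (h : ι → (StrandDiagram n →₀ ZMod 2))
    (y : StrandDiagram n →₀ ZMod 2) :
    mulAlg (∑ i ∈ S, h i) y = ∑ i ∈ S, mulAlg (h i) y :=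
  map_sum (AddMonoidHom.mk' (fun x => mulAlg x y) (fun a b => mulAlg_add_left a b y)) h S

theorem mulAlg_single_left (a : StrandDiagram n) (c : ZMod 2) (y : StrandDiagram n →₀ ZMod 2) :
    mulAlg (Finsupp.single a c) y = y.sum fun t ct => (c * ct) • mulGen a t := by
  unfold mulAlg
  apply Finsupp.sum_single_index
  simp only [zero_mul, zero_smul]
  exact Finset.sum_const_zero

theorem mulAlg_single_single (a b : StrandDiagram n) :
    mulAlg (Finsupp.single a (1 : ZMod 2)) (Finsupp.single b 1) = mulGen a b := by
  rw [mulAlg_single_left]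
  rw [Finsupp.sum_single_index (by simp)]
  simp

theorem mulAlg_single_sum {ι : Type*} (a : StrandDiagram n) (S : Finset ι)
    (h : ι → (StrandDiagram n →₀ ZMod 2)) :
    mulAlg (Finsupp.single a (1 : ZMod 2)) (∑ i ∈ S, h i)
      = ∑ i ∈ S, mulAlg (Finsupp.single a 1) (h i) := by
  have hadd : ∀ y1 y2 : StrandDiagram n →₀ ZMod 2,
      mulAlg (Finsupp.single a (1 : ZMod 2)) (y1 + y2)
        = mulAlg (Finsupp.single a 1) y1 + mulAlg (Finsupp.single a 1) y2 := by
    intro y1 y2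
    rw [mulAlg_single_left, mulAlg_single_left, mulAlg_single_left]
    apply Finsupp.sum_add_index'
    · intro t; simp
    · intro t c1 c2; rw [mul_add, add_smul]
  exact map_sum (AddMonoidHom.mk' (fun y => mulAlg (Finsupp.single a 1) y) hadd) h S

theorem dAlg_single (u : StrandDiagram n) : dAlg n (Finsupp.single u 1) = dGen u := by
  unfold dAlg
  rw [Finsupp.linearCombination_single, one_smul]

theorem sum_cross_strands {M : Type*} [AddCommMonoid M] (A : Finset (Fin n))
    (g : Fin n → Fin n) (F : (Fin n × Fin n) × (Fin n × Fin n) → M) :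
    ∑ pq ∈ ((strands A g) ×ˢ (strands A g)).filter
        (fun pq => pq.1.1 < pq.2.1 ∧ pq.2.2 < pq.1.2), F pq
      = ∑ x ∈ (A ×ˢ A).filter (fun x => x.1 < x.2 ∧ g x.2 < g x.1),
          F ((x.1, g x.1), (x.2, g x.2)) := by
  refine Finset.sum_nbij' (fun pq => (pq.1.1, pq.2.1))
    (fun x => ((x.1, g x.1), (x.2, g x.2))) ?_ ?_ ?_ ?_ ?_
  · intro p hp
    simp only [Finset.mem_coe, Finset.mem_filter, Finset.mem_product, mem_strands] at hp ⊢
    obtain ⟨⟨⟨m1, e1⟩, ⟨m2, e2⟩⟩, hc1, hc2⟩ := hp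
    refine ⟨⟨m1, m2⟩, hc1, ?_⟩
    rw [← e1, ← e2]; exact hc2
  · intro x hx
    simp only [Finset.mem_coe, Finset.mem_filter, Finset.mem_product, mem_strands] at hx ⊢
    obtain ⟨⟨m1, m2⟩, hc1, hc2⟩ := hx
    exact ⟨⟨⟨m1, by trivial⟩, ⟨m2, by trivial⟩⟩, hc1, hc2⟩
  · rintro ⟨⟨x1, y1⟩, ⟨x2, y2⟩⟩ hp
    simp only [Finset.mem_coe, Finset.mem_filter, Finset.mem_product, mem_strands] at hp
    obtain ⟨⟨⟨m1, e1⟩, ⟨m2, e2⟩⟩, -, -⟩ := hp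
    dsimp only at e1 e2 ⊢
    rw [e1, e2]
  · intro x hx; rfl
  · rintro ⟨⟨x1, y1⟩, ⟨x2, y2⟩⟩ hp
    simp only [Finset.mem_coe, Finset.mem_filter, Finset.mem_product, mem_strands] at hp
    obtain ⟨⟨⟨m1, e1⟩, ⟨m2, e2⟩⟩, -, -⟩ := hp
    dsimp only at e1 e2 ⊢
    rw [e1, e2]

theorem sum_crossT_reindex {M : Type*} [AddCommMonoid M] {A : Finset (Fin n)}
    {f : Fin n → Fin n} (hinj : Set.InjOn f ↑A) (ψ : Fin n → Fin n)
    (F : (Fin n) × (Fin n) → M) :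
    ∑ u ∈ ((A.image f) ×ˢ (A.image f)).filter (fun u => u.1 < u.2 ∧ ψ u.2 < ψ u.1), F u
      = ∑ x ∈ (A ×ˢ A).filter (fun x => f x.1 < f x.2 ∧ ψ (f x.2) < ψ (f x.1)),
          F (f x.1, f x.2) := by
  symm
  apply Finset.sum_bij (fun x _ => ((f x.1, f x.2) : Fin n × Fin n))
  · intro x hx
    simp only [Finset.mem_filter, Finset.mem_product, Finset.mem_image] at hx ⊢
    obtain ⟨⟨m1, m2⟩, hc⟩ := hx
    exact ⟨⟨⟨x.1, m1, rfl⟩, ⟨x.2, m2, rfl⟩⟩, hc⟩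
  · intro x hx y hy he
    simp only [Finset.mem_filter, Finset.mem_product] at hx hy
    simp only [Prod.mk.injEq] at he
    exact Prod.ext (hinj hx.1.1 hy.1.1 he.1) (hinj hx.1.2 hy.1.2 he.2)
  · intro q hq
    simp only [Finset.mem_filter, Finset.mem_product, Finset.mem_image] at hq
    obtain ⟨⟨⟨a, ha, hae⟩, ⟨b, hb, hbe⟩⟩, hc1, hc2⟩ := hq
    refine ⟨(a, b), Finset.mem_filter.2 ⟨Finset.mem_product.2 ⟨ha, hb⟩, ?_⟩, ?_⟩
    · dsimp only
      rw [hae, hbe]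
      exact ⟨hc1, hc2⟩
    · simp only [Prod.ext_iff]
      exact ⟨hae, hbe⟩
  · intro x hx; rfl

theorem DN_congr {A : Finset (Fin n)} (f : Fin n → Fin n) {g1 g2 : Fin n → Fin n}
    (h : ∀ a ∈ A, g1 a = g2 a) : DN A f g1 = DN A f g2 := by
  unfold DN
  congr 1
  apply Finset.filter_congr
  intro x hx
  obtain ⟨m1, m2⟩ := Finset.mem_product.1 hx
  rw [h _ m1, h _ m2]

theorem dGen_strands {A : Finset (Fin n)} {g : Fin n → Fin n} (hinj : Set.InjOn g ↑A) :
    dGen (strands A g) = ∑ x ∈ (A ×ˢ A).filter (fun x => x.1 < x.2 ∧ g x.2 < g x.1),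
      (if RN A g x.1 x.2 = 0
       then Finsupp.single (strands A (fun z => g (Equiv.swap x.1 x.2 z))) 1 else 0) := by
  unfold dGen
  rw [sum_cross_strands]
  refine Finset.sum_congr rfl fun x hx => ?_
  simp only [Finset.mem_filter, Finset.mem_product] at hx
  obtain ⟨⟨m1, m2⟩, hc1, hc2⟩ := hx
  have hne : x.1 ≠ x.2 := ne_of_lt hc1
  have hgne : g x.1 ≠ g x.2 := ne_of_gt hc2
  rw [exchange_strands m1 m2 hne hgne, crossings_strands, crossings_strands]
  have hiff : crN A (fun z => g (Equiv.swap x.1 x.2 z)) + 1 = crN A g ↔ RN A g x.1 x.2 = 0 := by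
    have := crN_exchange hinj m1 m2 hc1 hc2
    omega
  rw [if_congr hiff rfl rfl]

theorem mulGen_strands {A : Finset (Fin n)} {f : Fin n → Fin n} (hinjf : Set.InjOn f ↑A)
    {ψ : Fin n → Fin n} (hinjψ : Set.InjOn ψ ↑(A.image f)) :
    mulGen (strands A f) (strands (A.image f) ψ) =
      (if DN A f (fun a => ψ (f a)) = 0
       then Finsupp.single (strands A (fun a => ψ (f a))) 1 else 0) := by
  have hinjg : Set.InjOn (fun a => ψ (f a)) ↑A := by
    intro a ha b hb he
    exact hinjf ha hb (hinjψ (Finset.mem_coe.2 (Finset.mem_image.2 ⟨a, ha, rfl⟩))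
      (Finset.mem_coe.2 (Finset.mem_image.2 ⟨b, hb, rfl⟩)) he)
  unfold mulGen
  rw [image_snd_strands, image_fst_strands, concat_strands, crossings_strands,
    crossings_strands, crossings_strands, crN_image hinjf]
  have hiff : (A.image f = A.image f ∧
      crN A (fun a => ψ (f a)) = crN A f + crTN A f (fun a => ψ (f a))) ↔
      DN A f (fun a => ψ (f a)) = 0 := by
    have := crN_mul hinjf hinjg
    constructor
    · intro h; omega
    · intro h; exact ⟨rfl, by omega⟩
  rw [if_congr hiff rfl rfl]

end Plumbing
theorem stmt_10 (n : ℕ) (s t : StrandDiagram n) (hs : IsGen s) (ht : IsGen t) :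
    dAlg n (mulGen s t)
      = mulAlg (dGen s) (Finsupp.single t 1) + mulAlg (Finsupp.single s 1) (dGen t) := by
  classical
  obtain ⟨A, f, rfl, injf⟩ := isGen_repr hs
  obtain ⟨B, ψ, rfl, injψ⟩ := isGen_repr ht
  by_cases hmatch : (strands A f).image Prod.snd = (strands B ψ).image Prod.fst
  swap
  · -- mismatched middles: both sides are zero
    have hL : mulGen (strands A f) (strands B ψ) = 0 := by
      unfold mulGen
      rw [if_neg]
      rintro ⟨h1, -⟩
      exact hmatch h1
    rw [hL, map_zero]
    have hs0 : mulAlg (dGen (strands A f)) (Finsupp.single (strands B ψ) 1) = 0 := by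
      rw [dGen_strands injf, mulAlg_sum_left]
      refine Finset.sum_eq_zero fun x hx => ?_
      simp only [Finset.mem_filter, Finset.mem_product] at hx
      obtain ⟨⟨m1, m2⟩, hc1, hc2⟩ := hx
      rw [apply_ite (fun v => mulAlg v (Finsupp.single (strands B ψ) 1)), mulAlg_zero_left,
        mulAlg_single_single]
      have h0 : mulGen (strands A (fun z => f (Equiv.swap x.1 x.2 z))) (strands B ψ) = 0 := by
        unfold mulGen
        rw [if_neg]
        rintro ⟨h1, -⟩
        apply hmatch
        rw [image_snd_strands] at h1 ⊢
        rw [← image_comp_swap f m1 m2]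
        exact h1
      rw [h0]
      simp
    have ht0 : mulAlg (Finsupp.single (strands A f) 1) (dGen (strands B ψ)) = 0 := by
      rw [dGen_strands injψ, mulAlg_single_sum]
      refine Finset.sum_eq_zero fun u hu => ?_
      simp only [Finset.mem_filter, Finset.mem_product] at hu
      obtain ⟨⟨m1, m2⟩, hc1, hc2⟩ := hu
      rw [apply_ite (fun v => mulAlg (Finsupp.single (strands A f) 1) v),
        mulAlg_single_single]
      have h0 : mulGen (strands A f) (strands B (fun z => ψ (Equiv.swap u.1 u.2 z))) = 0 := by
        unfold mulGen
        rw [if_neg]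
        rintro ⟨h1, -⟩
        apply hmatch
        rw [image_fst_strands] at h1 ⊢
        exact h1
      have h00 : mulAlg (Finsupp.single (strands A f) (1 : ZMod 2)) (0 : StrandDiagram n →₀ ZMod 2) = 0 := by
        rw [mulAlg_single_left, Finsupp.sum_zero_index]
      rw [h0, h00]
      simp
    rw [hs0, ht0, add_zero]
  · -- matched middles
    have hB : B = A.image f := by
      have h1 : (strands A f).image Prod.snd = A.image f := image_snd_strands A f
      have h2 : (strands B ψ).image Prod.fst = B := image_fst_strands B ψ
      rw [h1, h2] at hmatch
      exact hmatch.symm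
    subst hB
    have injg : Set.InjOn (fun a => ψ (f a)) ↑A := by
      intro a ha b hb he
      exact injf ha hb (injψ (Finset.mem_coe.2 (Finset.mem_image.2 ⟨a, ha, rfl⟩))
        (Finset.mem_coe.2 (Finset.mem_image.2 ⟨b, hb, rfl⟩)) he)
    -- s-side expansion of the right-hand side
    have spart : mulAlg (dGen (strands A f)) (Finsupp.single (strands (A.image f) ψ) 1)
        = ∑ x ∈ (A ×ˢ A).filter (fun x => x.1 < x.2 ∧ f x.2 < f x.1),
            (if RN A f x.1 x.2 = 0 ∧
                DN A (fun z => f (Equiv.swap x.1 x.2 z))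
                  (fun z => ψ (f (Equiv.swap x.1 x.2 z))) = 0
             then Finsupp.single (strands A (fun z => ψ (f (Equiv.swap x.1 x.2 z)))) (1 : ZMod 2)
             else 0) := by
      rw [dGen_strands injf, mulAlg_sum_left]
      refine Finset.sum_congr rfl fun x hx => ?_
      simp only [Finset.mem_filter, Finset.mem_product] at hx
      obtain ⟨⟨m1, m2⟩, hc1, hc2⟩ := hx
      rw [apply_ite (fun v => mulAlg v (Finsupp.single (strands (A.image f) ψ) 1)),
        mulAlg_zero_left, mulAlg_single_single]
      have hinjf' : Set.InjOn (fun z => f (Equiv.swap x.1 x.2 z)) ↑A := by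
        intro a ha b hb he
        have h1 := injf (Finset.mem_coe.2 (swap_mem_of_mem m1 m2 ha))
          (Finset.mem_coe.2 (swap_mem_of_mem m1 m2 hb)) he
        have := congrArg (Equiv.swap x.1 x.2) h1
        simpa using this
      have hdom : strands (A.image f) ψ
          = strands (A.image (fun z => f (Equiv.swap x.1 x.2 z))) ψ := by
        rw [image_comp_swap f m1 m2]
      have hinjψ' : Set.InjOn ψ ↑(A.image (fun z => f (Equiv.swap x.1 x.2 z))) := by
        rw [image_comp_swap f m1 m2]
        exact injψ
      rw [hdom, mulGen_strands hinjf' hinjψ']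
      by_cases h1 : RN A f x.1 x.2 = 0 <;>
        by_cases h2 : DN A (fun z => f (Equiv.swap x.1 x.2 z))
          (fun z => ψ (f (Equiv.swap x.1 x.2 z))) = 0 <;>
        simp [h1, h2]
    -- t-side expansion of the right-hand side
    have tpart : mulAlg (Finsupp.single (strands A f) 1) (dGen (strands (A.image f) ψ))
        = ∑ x ∈ (A ×ˢ A).filter (fun x => f x.1 < f x.2 ∧ ψ (f x.2) < ψ (f x.1)),
            (if RTN A f (fun a => ψ (f a)) x.1 x.2 = 0 ∧
                DN A f (fun z => ψ (f (Equiv.swap x.1 x.2 z))) = 0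
             then Finsupp.single (strands A (fun z => ψ (f (Equiv.swap x.1 x.2 z)))) (1 : ZMod 2)
             else 0) := by
      rw [dGen_strands injψ, mulAlg_single_sum, sum_crossT_reindex injf ψ]
      refine Finset.sum_congr rfl fun x hx => ?_
      simp only [Finset.mem_filter, Finset.mem_product] at hx
      obtain ⟨⟨m1, m2⟩, hc1, hc2⟩ := hx
      rw [apply_ite (fun v => mulAlg (Finsupp.single (strands A f) 1) v),
        mulAlg_single_single]
      have h00 : mulAlg (Finsupp.single (strands A f) (1 : ZMod 2)) (0 : StrandDiagram n →₀ ZMod 2) = 0 := by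
        rw [mulAlg_single_left, Finsupp.sum_zero_index]
      rw [h00, RN_image injf ψ m1 m2]
      have hinjψ' : Set.InjOn (fun z => ψ (Equiv.swap (f x.1) (f x.2) z)) ↑(A.image f) := by
        intro a ha b hb he
        have hfx1 : f x.1 ∈ A.image f := Finset.mem_image.2 ⟨x.1, m1, rfl⟩
        have hfx2 : f x.2 ∈ A.image f := Finset.mem_image.2 ⟨x.2, m2, rfl⟩
        have h1 := injψ (Finset.mem_coe.2 (swap_mem_of_mem hfx1 hfx2 (Finset.mem_coe.1 ha)))
          (Finset.mem_coe.2 (swap_mem_of_mem hfx1 hfx2 (Finset.mem_coe.1 hb))) he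
        have := congrArg (Equiv.swap (f x.1) (f x.2)) h1
        simpa using this
      rw [mulGen_strands injf hinjψ']
      have hagree : ∀ a ∈ A,
          ψ (Equiv.swap (f x.1) (f x.2) (f a)) = ψ (f (Equiv.swap x.1 x.2 a)) := by
        intro a ha
        rcases eq_or_ne a x.1 with rfl | h1
        · rw [Equiv.swap_apply_left, Equiv.swap_apply_left]
        · rcases eq_or_ne a x.2 with rfl | h2
          · rw [Equiv.swap_apply_right, Equiv.swap_apply_right]
          · rw [Equiv.swap_apply_of_ne_of_ne h1 h2,
              Equiv.swap_apply_of_ne_of_ne (fun h => h1 (injf ha m1 h))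
                (fun h => h2 (injf ha m2 h))]
      rw [DN_congr f hagree, strands_congr hagree]
      by_cases h1 : RTN A f (fun a => ψ (f a)) x.1 x.2 = 0 <;>
        by_cases h2 : DN A f (fun z => ψ (f (Equiv.swap x.1 x.2 z))) = 0 <;>
        simp [h1, h2]
    by_cases hD : DN A f (fun a => ψ (f a)) = 0
    · -- no double crossings: termwise Leibniz
      have hnd := DN_eq_zero_iff.1 hD
      have lhsD : dAlg n (mulGen (strands A f) (strands (A.image f) ψ))
          = ∑ x ∈ (A ×ˢ A).filter (fun x => x.1 < x.2 ∧ ψ (f x.2) < ψ (f x.1)),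
              (if RN A (fun a => ψ (f a)) x.1 x.2 = 0
               then Finsupp.single (strands A (fun z => ψ (f (Equiv.swap x.1 x.2 z)))) 1
               else 0) := by
        rw [mulGen_strands injf injψ, if_pos hD, dAlg_single, dGen_strands injg]
      rw [lhsD, spart, tpart]
      rw [← Finset.sum_filter_add_sum_filter_not
        ((A ×ˢ A).filter (fun x => x.1 < x.2 ∧ ψ (f x.2) < ψ (f x.1)))
        (fun x => f x.2 < f x.1)]
      congr 1
      · -- s-type crossings
        have hidx : ((A ×ˢ A).filter (fun x => x.1 < x.2 ∧ ψ (f x.2) < ψ (f x.1))).filter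
              (fun x => f x.2 < f x.1)
            = (A ×ˢ A).filter (fun x => x.1 < x.2 ∧ f x.2 < f x.1) := by
          rw [Finset.filter_filter]
          apply Finset.filter_congr
          intro x hx
          obtain ⟨m1, m2⟩ := Finset.mem_product.1 hx
          constructor
          · rintro ⟨⟨h1, h2⟩, h3⟩
            exact ⟨h1, h3⟩
          · rintro ⟨h1, h3⟩
            refine ⟨⟨h1, ?_⟩, h3⟩
            rcases lt_trichotomy (ψ (f x.1)) (ψ (f x.2)) with h | h | h
            · exact ((hnd x.1 m1 x.2 m2 h1 h3 h)).elim
            · exact absurd (injg m1 m2 h) (ne_of_lt h1)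
            · exact h
        rw [hidx]
        refine Finset.sum_congr rfl fun x hx => ?_
        simp only [Finset.mem_filter, Finset.mem_product] at hx
        obtain ⟨⟨m1, m2⟩, hc1, hc2⟩ := hx
        have hg2 : ψ (f x.2) < ψ (f x.1) := by
          rcases lt_trichotomy (ψ (f x.1)) (ψ (f x.2)) with h | h | h
          · exact ((hnd x.1 m1 x.2 m2 hc1 hc2 h)).elim
          · exact absurd (injg m1 m2 h) (ne_of_lt hc1)
          · exact h
        refine if_congr ?_ rfl rfl
        rw [RN_eq_zero_iff, RN_eq_zero_iff, DN_eq_zero_iff]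
        exact lemEs injf injg m1 m2 hc1 hc2 hg2 hnd
      · -- t-type crossings
        have hidx : ((A ×ˢ A).filter (fun x => x.1 < x.2 ∧ ψ (f x.2) < ψ (f x.1))).filter
              (fun x => ¬ f x.2 < f x.1)
            = (A ×ˢ A).filter (fun x => f x.1 < f x.2 ∧ ψ (f x.2) < ψ (f x.1)) := by
          rw [Finset.filter_filter]
          apply Finset.filter_congr
          intro x hx
          obtain ⟨m1, m2⟩ := Finset.mem_product.1 hx
          constructor
          · rintro ⟨⟨h1, h2⟩, h3⟩
            have hne : f x.1 ≠ f x.2 := fun h => (ne_of_lt h1) (injf m1 m2 h)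
            rcases hne.lt_or_gt with h | h
            · exact ⟨h, h2⟩
            · exact absurd h h3
          · rintro ⟨h1, h2⟩
            have hx12 : x.1 ≠ x.2 := fun h => by rw [h] at h1; exact lt_irrefl _ h1
            rcases hx12.lt_or_gt with h | h
            · exact ⟨⟨h, h2⟩, not_lt.2 (le_of_lt h1)⟩
            · exact ((hnd x.2 m2 x.1 m1 h h1 h2)).elim
        rw [hidx]
        refine Finset.sum_congr rfl fun x hx => ?_
        simp only [Finset.mem_filter, Finset.mem_product] at hx
        obtain ⟨⟨m1, m2⟩, hc1, hc2⟩ := hx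
        have hx12 : x.1 < x.2 := by
          have hne : x.1 ≠ x.2 := fun h => by rw [h] at hc1; exact lt_irrefl _ hc1
          rcases hne.lt_or_gt with h | h
          · exact h
          · exact ((hnd x.2 m2 x.1 m1 h hc1 hc2)).elim
        refine if_congr ?_ rfl rfl
        rw [RN_eq_zero_iff, RTN_eq_zero_iff, DN_eq_zero_iff]
        exact lemEt injf injg m1 m2 hx12 hc1 hc2 hnd
    · -- double crossings present: left side vanishes, right side cancels
      have hL : mulGen (strands A f) (strands (A.image f) ψ) = 0 := by
        rw [mulGen_strands injf injψ, if_neg hD]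
      rw [hL, map_zero, spart, tpart]
      -- restrict both sums to double pairs
      have e1 : ∑ x ∈ (A ×ˢ A).filter (fun x => x.1 < x.2 ∧ f x.2 < f x.1),
            (if RN A f x.1 x.2 = 0 ∧
                DN A (fun z => f (Equiv.swap x.1 x.2 z))
                  (fun z => ψ (f (Equiv.swap x.1 x.2 z))) = 0
             then Finsupp.single (strands A (fun z => ψ (f (Equiv.swap x.1 x.2 z)))) (1 : ZMod 2)
             else 0)
          = ∑ x ∈ ((A ×ˢ A).filter (fun x => x.1 < x.2 ∧ f x.2 < f x.1)).filter
              (fun x => ψ (f x.1) < ψ (f x.2)),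
            (if RN A f x.1 x.2 = 0 ∧
                DN A (fun z => f (Equiv.swap x.1 x.2 z))
                  (fun z => ψ (f (Equiv.swap x.1 x.2 z))) = 0
             then Finsupp.single (strands A (fun z => ψ (f (Equiv.swap x.1 x.2 z)))) (1 : ZMod 2)
             else 0) := by
        symm
        apply Finset.sum_filter_of_ne
        intro x hx hne0
        simp only [Finset.mem_filter, Finset.mem_product] at hx
        obtain ⟨⟨m1, m2⟩, hc1, hc2⟩ := hx
        have hcond : RN A f x.1 x.2 = 0 ∧
            DN A (fun z => f (Equiv.swap x.1 x.2 z))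
              (fun z => ψ (f (Equiv.swap x.1 x.2 z))) = 0 := by
          by_contra hc
          rw [if_neg hc] at hne0
          exact hne0 rfl
        rcases lt_trichotomy (ψ (f x.1)) (ψ (f x.2)) with h | h | h
        · exact h
        · exact absurd (injg m1 m2 h) (ne_of_lt hc1)
        · exfalso
          apply hD
          apply DN_eq_zero_iff.2
          exact lemAs injf injg m1 m2 hc1 hc2 h (RN_eq_zero_iff.1 hcond.1)
            (DN_eq_zero_iff.1 hcond.2)
      have e2 : ∑ x ∈ (A ×ˢ A).filter (fun x => f x.1 < f x.2 ∧ ψ (f x.2) < ψ (f x.1)),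
            (if RTN A f (fun a => ψ (f a)) x.1 x.2 = 0 ∧
                DN A f (fun z => ψ (f (Equiv.swap x.1 x.2 z))) = 0
             then Finsupp.single (strands A (fun z => ψ (f (Equiv.swap x.1 x.2 z)))) (1 : ZMod 2)
             else 0)
          = ∑ x ∈ ((A ×ˢ A).filter (fun x => f x.1 < f x.2 ∧ ψ (f x.2) < ψ (f x.1))).filter
              (fun x => x.2 < x.1),
            (if RTN A f (fun a => ψ (f a)) x.1 x.2 = 0 ∧
                DN A f (fun z => ψ (f (Equiv.swap x.1 x.2 z))) = 0
             then Finsupp.single (strands A (fun z => ψ (f (Equiv.swap x.1 x.2 z)))) (1 : ZMod 2)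
             else 0) := by
        symm
        apply Finset.sum_filter_of_ne
        intro x hx hne0
        simp only [Finset.mem_filter, Finset.mem_product] at hx
        obtain ⟨⟨m1, m2⟩, hc1, hc2⟩ := hx
        have hcond : RTN A f (fun a => ψ (f a)) x.1 x.2 = 0 ∧
            DN A f (fun z => ψ (f (Equiv.swap x.1 x.2 z))) = 0 := by
          by_contra hc
          rw [if_neg hc] at hne0
          exact hne0 rfl
        have hne : x.1 ≠ x.2 := fun h => by rw [h] at hc1; exact lt_irrefl _ hc1
        rcases hne.lt_or_gt with h | h
        · exfalso
          apply hD
          apply DN_eq_zero_iff.2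
          exact lemAt injf injg m1 m2 h hc1 hc2 (RTN_eq_zero_iff.1 hcond.1)
            (DN_eq_zero_iff.1 hcond.2)
        · exact h
      have ebij : ∑ x ∈ ((A ×ˢ A).filter (fun x => x.1 < x.2 ∧ f x.2 < f x.1)).filter
              (fun x => ψ (f x.1) < ψ (f x.2)),
            (if RN A f x.1 x.2 = 0 ∧
                DN A (fun z => f (Equiv.swap x.1 x.2 z))
                  (fun z => ψ (f (Equiv.swap x.1 x.2 z))) = 0
             then Finsupp.single (strands A (fun z => ψ (f (Equiv.swap x.1 x.2 z)))) (1 : ZMod 2)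
             else 0)
          = ∑ x ∈ ((A ×ˢ A).filter (fun x => f x.1 < f x.2 ∧ ψ (f x.2) < ψ (f x.1))).filter
              (fun x => x.2 < x.1),
            (if RTN A f (fun a => ψ (f a)) x.1 x.2 = 0 ∧
                DN A f (fun z => ψ (f (Equiv.swap x.1 x.2 z))) = 0
             then Finsupp.single (strands A (fun z => ψ (f (Equiv.swap x.1 x.2 z)))) (1 : ZMod 2)
             else 0) := by
        refine Finset.sum_nbij' (fun x => (x.2, x.1)) (fun x => (x.2, x.1)) ?_ ?_ ?_ ?_ ?_
        · intro x hx
          simp only [Finset.mem_filter, Finset.mem_product] at hx ⊢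
          obtain ⟨⟨⟨m1, m2⟩, hc1, hc2⟩, hdd⟩ := hx
          exact ⟨⟨⟨m2, m1⟩, hc2, hdd⟩, hc1⟩
        · intro x hx
          simp only [Finset.mem_filter, Finset.mem_product] at hx ⊢
          obtain ⟨⟨⟨m1, m2⟩, hc1, hc2⟩, hdd⟩ := hx
          exact ⟨⟨⟨m2, m1⟩, hdd, hc1⟩, hc2⟩
        · intro x hx; rfl
        · intro x hx; rfl
        · intro x hx
          simp only [Finset.mem_filter, Finset.mem_product] at hx
          obtain ⟨⟨⟨m1, m2⟩, hc1, hc2⟩, hdd⟩ := hx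
          -- x.1 < x.2, f x.2 < f x.1, g x.1 < g x.2 : a double pair
          have hsc : Equiv.swap x.2 x.1 = Equiv.swap x.1 x.2 := Equiv.swap_comm x.2 x.1
          dsimp only
          rw [hsc]
          refine if_congr ?_ rfl rfl
          rw [RN_eq_zero_iff, DN_eq_zero_iff, RTN_eq_zero_iff, DN_eq_zero_iff]
          exact lemB injf injg m1 m2 hc1 hc2 hdd
      simp only [e1, e2, ebij]
      exact (finsupp_add_self _).symm
end

section
/- Let A be a dg-algebra over a ring of idempotents k and suppose X = ᴬL_A is a rank-1 type DA bimodule over (A, A) with δ¹₁ = 0, corresponding to an A∞-morphism φ : A → A. If X admits a grading by a group G with all generators in degree 0 that is compatible with a G-grading on A, and φ₁(ξ) = ξ for every degree-generating element ξ of a set that generates the homology of A, and moreover any graded algebra endomorphism of H(A) fixing these generators is the identity, then φ₁ induces the identity map on H(A); in particular φ is a quasi-isomorphism and X is quasi-invertible. -/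
/-!
STATEMENT 12: Let `A` be a dg-algebra over `F₂` and `X = ᴬLᴀ` a rank-1 type DA
bimodule over `(A, A)` with `δ¹₁ = 0`, corresponding to an `A∞`-morphism
`φ : A → A` (its components `φ₁, φ₂, …` satisfy the `A∞`-morphism relations; below
we use the first two relations: `φ₁` is a chain map and `φ₁` is multiplicative up
to the homotopy `φ₂`).  Suppose `X` has a `G`-grading with all generators in
degree 0 compatible with a `G`-grading on `A` (so `φ₁` preserves the grading),
`φ₁(ξ) = ξ` for every element `ξ` of a set `S` of cycles generating the homology
of `A`, and any graded algebra endomorphism of `H(A)` fixing these generators is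
the identity.  Then `φ₁` induces the identity on `H(A)`; in particular `φ` is a
quasi-isomorphism (the induced map on homology is bijective) and `X` is
quasi-invertible (at the chain level, `φ₁` has a two-sided homotopy inverse).
-/

/-- Over the field `ZMod 2`, a chain map `f` (w.r.t. a differential `d`) that sends
cycles to boundaries is null-homotopic. -/
lemma nullHomotopic {A : Type} [AddCommGroup A] [Module (ZMod 2) A]
    (d f : A →ₗ[ZMod 2] A) (hd2 : ∀ a, d (d a) = 0)
    (hcomm : ∀ a, f (d a) = d (f a))
    (hcb : ∀ x, d x = 0 → ∃ z, f x = d z) :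
    ∃ h : A →ₗ[ZMod 2] A, ∀ a, f a = d (h a) + h (d a) := by
  set Z := LinearMap.ker d with hZ
  set B := LinearMap.range d with hB
  have hBZ : B ≤ Z := by
    rintro x ⟨y, rfl⟩
    exact LinearMap.mem_ker.2 (hd2 y)
  obtain ⟨p, hp⟩ := Z.subtype.exists_leftInverse_of_injective (Submodule.ker_subtype Z)
  have hpz : ∀ z : Z, p (z : A) = z := fun z => congrArg (fun g => g z) hp
  let j : B →ₗ[ZMod 2] Z := Submodule.inclusion hBZ
  obtain ⟨r, hr⟩ := j.exists_leftInverse_of_injective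
    (LinearMap.ker_eq_bot.2 (Submodule.inclusion_injective hBZ))
  have hrj : ∀ b : B, r (j b) = b := fun b => congrArg (fun g => g b) hr
  obtain ⟨t₀, ht₀⟩ := d.rangeRestrict.exists_rightInverse_of_surjective
    (LinearMap.range_rangeRestrict d)
  have hdt₀ : ∀ b : B, d (t₀ b) = (b : A) := by
    intro b
    have h1 := congrArg (fun g => g b) ht₀
    simpa using congrArg Subtype.val h1
  set t : B →ₗ[ZMod 2] A := t₀ - Z.subtype ∘ₗ p ∘ₗ t₀ with ht
  have hdt : ∀ b : B, d (t b) = (b : A) := by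
    intro b
    have hz : d ((p (t₀ b) : A)) = 0 := (p (t₀ b)).2
    simp [ht, hdt₀ b, hz]
  have hpt : ∀ b : B, p (t b) = 0 := by
    intro b
    simp [ht, hpz]
  have hfZB : ∀ z : Z, f (z : A) ∈ B := by
    intro z
    obtain ⟨w, hw⟩ := hcb (z : A) z.2
    exact ⟨w, hw.symm⟩
  set fZ : Z →ₗ[ZMod 2] B := LinearMap.codRestrict B (f ∘ₗ Z.subtype) (fun z => hfZB z) with hfZ
  have hfZval : ∀ z : Z, ((fZ z : A)) = f (z : A) := fun z => rfl
  set h : A →ₗ[ZMod 2] A :=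
    f ∘ₗ t ∘ₗ r ∘ₗ p + t ∘ₗ fZ ∘ₗ (LinearMap.id - j ∘ₗ r) ∘ₗ p with hh
  refine ⟨h, fun a => ?_⟩
  -- d (h a) = f (p a)
  have h1 : d (h a) = f ((p a : A)) := by
    have e1 : d (f (t (r (p a)))) = f ((r (p a) : A)) := by
      rw [← hcomm, hdt]
    have e2 : d (t (fZ (p a - j (r (p a))))) = f ((p a : A)) - f ((r (p a) : A)) := by
      rw [hdt]
      have e3 : ((fZ (p a - j (r (p a))) : A)) = f (((p a - j (r (p a)) : Z) : A)) := rfl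
      rw [e3]
      have e4 : (((p a - j (r (p a)) : Z) : A)) = (p a : A) - ((j (r (p a)) : A)) := rfl
      have e5 : ((j (r (p a)) : A)) = ((r (p a) : A)) := rfl
      rw [e4, e5, map_sub]
    simp only [hh, LinearMap.add_apply, LinearMap.coe_comp, Function.comp_apply,
      LinearMap.sub_apply, LinearMap.id_apply, map_add]
    rw [e1, e2]
    abel
  -- h (d a) = f (t ba)
  have hda_mem : d a ∈ B := ⟨a, rfl⟩
  set ba : B := ⟨d a, hda_mem⟩ with hba
  have hpda : p (d a) = j ba := by
    have e : ((j ba : A)) = d a := rfl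
    rw [← e, hpz]
  have h2 : h (d a) = f (t ba) := by
    simp only [hh, LinearMap.add_apply, LinearMap.coe_comp, Function.comp_apply,
      LinearMap.sub_apply, LinearMap.id_apply]
    rw [hpda, hrj]
    simp
  -- t ba = a - p a
  have h3 : t ba = a - (p a : A) := by
    have hdx : d (t ba - (a - (p a : A))) = 0 := by
      have hz : d ((p a : A)) = 0 := (p a).2
      rw [map_sub, map_sub, hdt, hz]
      show d a - (d a - 0) = 0
      abel
    have hx : t ba - (a - (p a : A)) ∈ Z := LinearMap.mem_ker.2 hdx
    have hpx : p (t ba - (a - (p a : A))) = 0 := by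
      rw [map_sub, map_sub, hpt, hpz]
      abel
    have e0 : (⟨t ba - (a - (p a : A)), hx⟩ : Z) = 0 := by
      rw [← hpz ⟨_, hx⟩]
      exact hpx
    have e1 := congrArg Subtype.val e0
    simpa [sub_eq_zero] using e1
  rw [h1, h2, h3, ← map_add]
  congr 1
  abel

theorem stmt_12 {A : Type} [Ring A] [Algebra (ZMod 2) A]
    (dA : A →ₗ[ZMod 2] A)
    -- `A` is a dg-algebra:
    (hdA2 : ∀ a, dA (dA a) = 0)
    (hLeibA : ∀ a b, dA (a * b) = dA a * b + a * dA b)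
    -- the grading of `A` by a group `G`:
    {G : Type} [AddCommGroup G] [DecidableEq G] (grading : G → Submodule (ZMod 2) A)
    (hinternal : DirectSum.IsInternal grading)
    (hdgr : ∀ g : G, ∀ x ∈ grading g, dA x ∈ grading g)
    -- the first two components of the `A∞`-morphism `φ : A → A` corresponding to
    -- the rank-1 type DA bimodule `X` with `δ¹₁ = 0`:
    (φ1 : A →ₗ[ZMod 2] A) (φ2 : A →ₗ[ZMod 2] A →ₗ[ZMod 2] A)
    -- the `A∞`-morphism relations with one and two inputs:
    (hchain : ∀ a, φ1 (dA a) = dA (φ1 a))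
    (hmult : ∀ a b,
      φ1 (a * b) + φ1 a * φ1 b = dA (φ2 a b) + φ2 (dA a) b + φ2 a (dA b))
    -- `X` is graded with all generators in degree 0, compatibly with the grading
    -- of `A`; consequently `φ₁` preserves the grading:
    (hφgr : ∀ g : G, ∀ x ∈ grading g, φ1 x ∈ grading g)
    -- the set `S` of degree-generating cycles, fixed by `φ₁`:
    (S : Set A) (hScyc : ∀ ξ ∈ S, dA ξ = 0) (hfix : ∀ ξ ∈ S, φ1 ξ = ξ)
    -- `S` generates the homology of `A`, in the sense that any graded algebra
    -- endomorphism of `H(A)` fixing the classes of `S` is the identity: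
    (hrigid : ∀ ψ : A →ₗ[ZMod 2] A,
      (∀ a, ψ (dA a) = dA (ψ a)) →
      (∀ g : G, ∀ x ∈ grading g, ψ x ∈ grading g) →
      (∀ a b, dA a = 0 → dA b = 0 → ∃ z, ψ (a * b) + ψ a * ψ b = dA z) →
      (∀ ξ ∈ S, ∃ z, ψ ξ + ξ = dA z) →
      ∀ x, dA x = 0 → ∃ z, ψ x + x = dA z) :
    -- then `φ₁` induces the identity map on `H(A)` …
    (∀ x, dA x = 0 → ∃ z, φ1 x + x = dA z) ∧
    -- … in particular `φ` is a quasi-isomorphism: surjective on homology …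
    (∀ y, dA y = 0 → ∃ x, dA x = 0 ∧ ∃ z, φ1 x + y = dA z) ∧
    -- … and injective on homology …
    (∀ x, dA x = 0 → (∃ z, φ1 x = dA z) → ∃ w, x = dA w) ∧
    -- … and `X` is quasi-invertible: `φ₁` admits a two-sided homotopy inverse:
    ∃ (ψ1 : A →ₗ[ZMod 2] A) (H H' : A →ₗ[ZMod 2] A),
      (∀ a, ψ1 (dA a) = dA (ψ1 a)) ∧
      (∀ a, φ1 (ψ1 a) + a = dA (H a) + H (dA a)) ∧
      (∀ a, ψ1 (φ1 a) + a = dA (H' a) + H' (dA a)) := by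
  -- characteristic 2
  have h2 : ∀ a : A, a + a = 0 := by
    intro a
    have := two_smul (ZMod 2) a
    rw [show (2 : ZMod 2) = 0 by decide, zero_smul] at this
    exact this.symm
  -- φ1 induces the identity on homology
  have hid : ∀ x, dA x = 0 → ∃ z, φ1 x + x = dA z := by
    refine hrigid φ1 hchain hφgr ?_ ?_
    · intro a b ha hb
      refine ⟨φ2 a b, ?_⟩
      rw [hmult a b, ha, hb]
      simp
    · intro ξ hξ
      exact ⟨0, by rw [hfix ξ hξ, h2 ξ, map_zero]⟩
  refine ⟨hid, ?_, ?_, ?_⟩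
  · intro y hy
    exact ⟨y, hy, hid y hy⟩
  · rintro x hx ⟨z, hz⟩
    obtain ⟨w, hw⟩ := hid x hx
    refine ⟨w + z, ?_⟩
    have : x = (φ1 x + x) + φ1 x := by
      rw [add_comm (φ1 x) x, add_assoc, h2 (φ1 x), add_zero]
    rw [this, hw, hz, ← map_add]
  · -- homotopy inverse: ψ1 = φ1
    set f : A →ₗ[ZMod 2] A := φ1 ∘ₗ φ1 + LinearMap.id with hf
    have hfcomm : ∀ a, f (dA a) = dA (f a) := by
      intro a
      simp only [hf, LinearMap.add_apply, LinearMap.coe_comp, Function.comp_apply,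
        LinearMap.id_apply]
      rw [hchain, hchain, ← map_add]
    have hfcb : ∀ x, dA x = 0 → ∃ z, f x = dA z := by
      intro x hx
      have hφx : dA (φ1 x) = 0 := by rw [← hchain, hx, map_zero]
      obtain ⟨z1, hz1⟩ := hid x hx
      obtain ⟨z2, hz2⟩ := hid (φ1 x) hφx
      refine ⟨z2 + z1, ?_⟩
      simp only [hf, LinearMap.add_apply, LinearMap.coe_comp, Function.comp_apply,
        LinearMap.id_apply]
      rw [map_add, ← hz1, ← hz2]
      calc φ1 (φ1 x) + x = φ1 (φ1 x) + (φ1 x + φ1 x) + x := by rw [h2 (φ1 x), add_zero]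
        _ = φ1 (φ1 x) + φ1 x + (φ1 x + x) := by abel
    obtain ⟨h, hh⟩ := nullHomotopic dA f hdA2 hfcomm hfcb
    refine ⟨φ1, h, h, fun a => hchain a, fun a => ?_, fun a => ?_⟩ <;>
    · have := hh a
      simpa [hf] using this
end
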